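/- arXiv:1406.6674 — 8 statements merged into one kernel-verified Lean document; each statement's English description precedes it below -/
import Mathlib

section
/- The elements π_o, as o ranges over all orbits of the multiplication action of ⟨p⟩ on ℤ/dℤ, form a complete system of orthogonal idempotents in the group algebra W[H]: π_o² = π_o for every orbit o, π_o·π_{o'} = 0 whenever o ≠ o', and ∑_o π_o = 1. Moreover every coefficient of each π_o lies in the image of ℤ_p in W, and for each orbit o the ℤ_p-module Γ_o := π_o·ℤ_p[H] (the image under multiplication by π_o of the ℤ_p-span of H inside W[H]) is a free ℤ_p-module of rank |o|. -/
/-!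
Put `ψ := τ ∘ χ⁻¹ : H → Wˣ`, an injective character, and `e_i := d⁻¹ ∑_h ψ(h)^i h` for
`i ∈ ℤ/dℤ`, so that `π_o = ∑_{i ∈ o} e_i`. The orthogonality relations of the perfect pairing
`ℤ/dℤ × H → Wˣ`, `(i, h) ↦ ψ(h)^i`, make `(e_i)` a complete family of orthogonal idempotents,
and the first three claims follow because the orbits partition `ℤ/dℤ`.

The Witt vector Frobenius sends `τ(x)` to `τ(x)^p`, hence permutes the terms of
`∑_{i ∈ o} ψ(h)^i` (multiplication by `p` permutes `o`); a Frobenius-fixed Witt vector over `k̄`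
has all its components in `𝔽_p`, so it lies in `ℤ_p`. Thus `π_o` comes from an idempotent of
`ℤ_p[H]`, left multiplication by which is a projection of the free module `ℤ_p[H]`; the rank of
its image is its trace, `d` times the coefficient of `1` in `π_o`, that is `|o|`.
-/

open scoped Classical

noncomputable section

/-- The canonical ring map `ℤ_p → W(k̄)`: the identification `ℤ_p ≅ W(𝔽_p)` followed by
the functorial map `W(𝔽_p) → W(K)` induced by `𝔽_p → K`.  We record it as an algebra
structure, giving "the image of `ℤ_p` in `W`" and the `ℤ_p`-module structure on
`W`-modules. -/
instance padicIntAlgebraWitt (p : ℕ) [Fact p.Prime] (K : Type*) [CommRing K]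
    [Algebra (ZMod p) K] : Algebra ℤ_[p] (WittVector p K) :=
  ((WittVector.map (algebraMap (ZMod p) K)).comp
    (WittVector.equiv p).symm.toRingHom).toAlgebra

/-- The orbit of `i ∈ ℤ/dℤ` under multiplication by `p` (as a finite set). -/
def orb (p d : ℕ) [NeZero d] (i : ZMod d) : Finset (ZMod d) :=
  Finset.image (fun j : ℕ => (p : ZMod d) ^ j * i) (Finset.range d)

/-- The set of all orbits of the multiplication action of `⟨p⟩` on `ℤ/dℤ`. -/
def orbitsAll (p d : ℕ) [NeZero d] : Finset (Finset (ZMod d)) :=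
  Finset.image (orb p d) Finset.univ

/-- The idempotent `π_o = d⁻¹·∑_{h ∈ H} (∑_{i ∈ o} τ(χ(h))^(−i))·h` in the group
algebra `W[H]`, where `τ` is the Teichmüller lift and `χ : H → k̄ˣ` is an injective
character; here `τ(χ(h))^(−i) = τ((χ(h)⁻¹)^(i.val))`, which is well defined since
`τ(χ(h))^d = 1`. -/
def piIdem (p d : ℕ) [Fact p.Prime] [NeZero d] {H : Type} [CommGroup H] [Fintype H]
    (χ : H →* (AlgebraicClosure (ZMod p))ˣ) (o : Finset (ZMod d)) :
    MonoidAlgebra (WittVector p (AlgebraicClosure (ZMod p))) H :=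
  ∑ h : H, MonoidAlgebra.single h
    (Ring.inverse (d : WittVector p (AlgebraicClosure (ZMod p))) *
      ∑ i ∈ o, WittVector.teichmuller p
        ((((χ h)⁻¹ ^ i.val : (AlgebraicClosure (ZMod p))ˣ) : AlgebraicClosure (ZMod p))))

section PowZModVal

variable {M : Type*} [Monoid M] {u : M} {d : ℕ}

theorem pow_zmod_val_natCast (hu : u ^ d = 1) (n : ℕ) : u ^ (n : ZMod d).val = u ^ n := by
  conv_rhs => rw [← Nat.mod_add_div n d, pow_add, pow_mul, hu, one_pow, mul_one]
  rw [ZMod.val_natCast]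

variable [NeZero d]

theorem pow_zmod_val_add (hu : u ^ d = 1) (i j : ZMod d) :
    u ^ (i + j).val = u ^ i.val * u ^ j.val := by
  rw [← pow_add, ← pow_zmod_val_natCast hu (i.val + j.val), Nat.cast_add, ZMod.natCast_zmod_val,
    ZMod.natCast_zmod_val]

theorem pow_zmod_val_injective (hu : orderOf u = d) :
    Function.Injective fun i : ZMod d => u ^ i.val := fun i j h => by
  have hmod := (orderOf_pos_iff.mp (hu ▸ NeZero.pos d)).pow_eq_pow_iff_modEq.mp h
  rw [hu] at hmod
  rwa [← ZMod.natCast_zmod_val i, ← ZMod.natCast_zmod_val j, ZMod.natCast_eq_natCast_iff]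

theorem sum_pow_zmod_val_eq_zero {R : Type*} [CommRing R] [IsDomain R] {u : R}
    (hu : u ^ d = 1) (hu₁ : u ≠ 1) : ∑ i : ZMod d, u ^ i.val = 0 := by
  have hshift : u * ∑ i : ZMod d, u ^ i.val = ∑ i : ZMod d, u ^ i.val := by
    rw [Finset.mul_sum]
    refine Fintype.sum_equiv (Equiv.addLeft 1) _ _ fun i => ?_
    rw [Equiv.coe_addLeft, pow_zmod_val_add hu, ← Nat.cast_one, pow_zmod_val_natCast hu, pow_one]
  have hmul : (u - 1) * ∑ i : ZMod d, u ^ i.val = 0 := by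
    rw [sub_mul, hshift, one_mul, sub_self]
  exact (mul_eq_zero.mp hmul).resolve_left (sub_ne_zero.mpr hu₁)

end PowZModVal

theorem exists_orderOf_apply_eq_card {R G : Type*} [CommRing R] [IsDomain R] [Group G]
    [Fintype G] {ψ : G →* Rˣ} (hψ : Function.Injective ψ) :
    ∃ g, orderOf (ψ g) = Fintype.card G := by
  have := isCyclic_of_injective_ringHom ((Units.coeHom R).comp ψ) (Units.val_injective.comp hψ)
  obtain ⟨g, hg⟩ := IsCyclic.exists_ofOrder_eq_natCard (α := G)
  exact ⟨g, by rw [orderOf_injective ψ hψ, hg, Nat.card_eq_fintype_card]⟩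

theorem map_ringInverse {R S : Type*} [Semiring R] [Semiring S] (f : R →+* S) {a : R}
    (ha : IsUnit a) : f (Ring.inverse a) = Ring.inverse (f a) := by
  rw [eq_comm, ← mul_one (Ring.inverse (f a)), Ring.inverse_mul_eq_iff_eq_mul _ _ _ (ha.map f),
    ← map_mul, Ring.mul_inverse_cancel _ ha, map_one]

theorem PadicInt.isUnit_natCast_of_coprime {p d : ℕ} [Fact p.Prime] (hpd : p.Coprime d) :
    IsUnit (d : ℤ_[p]) :=
  PadicInt.isUnit_iff.mpr (PadicInt.norm_natCast_eq_one_iff.mpr hpd)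

theorem OrthogonalIdempotents.sum_mul_sum_of_disjoint {R I : Type*} [Semiring R] {e : I → R}
    (he : OrthogonalIdempotents e) {s t : Finset I} (hst : Disjoint s t) :
    (∑ i ∈ s, e i) * ∑ j ∈ t, e j = 0 := by
  rw [Finset.sum_mul]
  exact Finset.sum_eq_zero fun i hi => he.mul_sum_of_notMem (Finset.disjoint_left.mp hst hi)

section CharIdem

open MonoidAlgebra

variable {R G : Type*} [CommRing R] [Group G] [Fintype G]

def charIdem (ψ : G →* Rˣ) (d : ℕ) (i : ZMod d) : MonoidAlgebra R G :=
  ∑ g, single g (Ring.inverse (d : R) * (ψ g : R) ^ i.val)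

variable {ψ : G →* Rˣ} {d : ℕ}

theorem single_mul_charIdem (i : ZMod d) (h : G) (r : R) :
    single h r * charIdem ψ d i = (r * ((ψ h)⁻¹ ^ i.val : Rˣ)) • charIdem ψ d i := by
  simp only [charIdem, Finset.mul_sum, Finset.smul_sum, single_mul_single, smul_single']
  refine Fintype.sum_equiv (Equiv.mulLeft h) _ _ fun g => ?_
  simp only [Equiv.coe_mulLeft, map_mul, Units.val_mul, mul_pow, Units.val_pow_eq_pow_val]
  have hinv : ((ψ h)⁻¹ : Rˣ) ^ i.val * (ψ h : R) ^ i.val = (1 : R) := by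
    rw [← mul_pow, Units.inv_mul, one_pow]
  congr 1
  linear_combination (-(r * Ring.inverse (d : R) * (ψ g : R) ^ i.val)) * hinv

variable [IsDomain R] [NeZero d]

theorem sum_pow_zmod_val_mul_inv_pow (hψ : Function.Injective ψ) (hd : Fintype.card G = d)
    (i j : ZMod d) :
    ∑ g, (ψ g : R) ^ i.val * ((ψ g)⁻¹ ^ j.val : Rˣ) = if i = j then (d : R) else 0 := by
  split_ifs with hij
  · subst hij
    simp_rw [← Units.val_pow_eq_pow_val, ← Units.val_mul, ← mul_pow, mul_inv_cancel, one_pow,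
      Units.val_one, Finset.sum_const, Finset.card_univ, hd, nsmul_one]
  · let φ : G →* R := (Units.coeHom R).comp (ψ ^ i.val * (ψ ^ j.val)⁻¹)
    have hφ : φ ≠ 1 := fun hφ => by
      obtain ⟨g, hg⟩ := exists_orderOf_apply_eq_card hψ
      refine hij (pow_zmod_val_injective (hg.trans hd) ?_)
      have := DFunLike.congr_fun hφ g
      simp only [φ, MonoidHom.comp_apply, MonoidHom.mul_apply, MonoidHom.pow_apply,
        MonoidHom.inv_apply, Units.coeHom_apply, MonoidHom.one_apply, Units.val_eq_one,
        mul_inv_eq_one] at this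
      exact this
    rw [← sum_hom_units_eq_zero φ hφ]
    refine Finset.sum_congr rfl fun g _ => ?_
    simp [φ, inv_pow]

theorem sum_apply_pow_zmod_val (hψ : Function.Injective ψ) (hd : Fintype.card G = d) (g : G) :
    ∑ i : ZMod d, (ψ g : R) ^ i.val = if g = 1 then (d : R) else 0 := by
  split_ifs with hg
  · simp [hg]
  · refine sum_pow_zmod_val_eq_zero ?_ ?_
    · rw [← Units.val_pow_eq_pow_val, ← hd, ← map_pow, pow_card_eq_one, map_one, Units.val_one]
    · rwa [Ne, Units.val_eq_one, ← map_one ψ, hψ.eq_iff]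

theorem charIdem_mul (hψ : Function.Injective ψ) (hd : Fintype.card G = d) (hdR : IsUnit (d : R))
    (i j : ZMod d) : charIdem ψ d i * charIdem ψ d j = if i = j then charIdem ψ d i else 0 := by
  calc charIdem ψ d i * charIdem ψ d j
      = (Ring.inverse (d : R) * ∑ g, (ψ g : R) ^ i.val * ((ψ g)⁻¹ ^ j.val : Rˣ)) •
          charIdem ψ d j := by
        rw [charIdem, Finset.sum_mul, Finset.mul_sum, Finset.sum_smul]
        simp only [single_mul_charIdem, mul_assoc]
    _ = if i = j then charIdem ψ d i else 0 := by
        rw [sum_pow_zmod_val_mul_inv_pow hψ hd]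
        split_ifs with hij
        · rw [hij, Ring.inverse_mul_cancel _ hdR, one_smul]
        · rw [mul_zero, zero_smul]

theorem sum_charIdem (hψ : Function.Injective ψ) (hd : Fintype.card G = d)
    (hdR : IsUnit (d : R)) : ∑ i : ZMod d, charIdem ψ d i = 1 := by
  calc ∑ i : ZMod d, charIdem ψ d i
      = ∑ g, single g (Ring.inverse (d : R) * ∑ i : ZMod d, (ψ g : R) ^ i.val) := by
        simp only [charIdem, Finset.mul_sum]
        rw [Finset.sum_comm]
        exact Finset.sum_congr rfl fun g _ => (map_sum (singleAddHom g) _ _).symm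
    _ = 1 := by
        simp only [sum_apply_pow_zmod_val hψ hd]
        rw [Fintype.sum_eq_single 1 fun g hg => by rw [if_neg hg, mul_zero, single_zero],
          if_pos rfl, Ring.inverse_mul_cancel _ hdR, one_def]

theorem completeOrthogonalIdempotents_charIdem (hψ : Function.Injective ψ)
    (hd : Fintype.card G = d) (hdR : IsUnit (d : R)) :
    CompleteOrthogonalIdempotents (charIdem ψ d) :=
  ⟨OrthogonalIdempotents.iff_mul_eq.mpr (charIdem_mul hψ hd hdR), sum_charIdem hψ hd hdR⟩

end CharIdem

section Orbits

variable {p d : ℕ}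

theorem orderOf_natCast_pos_of_coprime (hpd : p.Coprime d) : 0 < orderOf (p : ZMod d) := by
  rw [← ZMod.coe_unitOfCoprime p hpd, orderOf_units]
  exact orderOf_pos _

variable [NeZero d]

theorem orderOf_natCast_le_of_coprime (hpd : p.Coprime d) : orderOf (p : ZMod d) ≤ d := by
  rw [← ZMod.coe_unitOfCoprime p hpd, orderOf_units]
  calc orderOf (ZMod.unitOfCoprime p hpd) ≤ Fintype.card (ZMod d)ˣ := orderOf_le_card_univ
    _ = d.totient := ZMod.card_units_eq_totient d
    _ ≤ d := Nat.totient_le d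

theorem mem_orb_iff (hpd : p.Coprime d) {i x : ZMod d} :
    x ∈ orb p d i ↔ ∃ n : ℕ, (p : ZMod d) ^ n * i = x := by
  refine ⟨fun hx => ?_, fun ⟨n, hn⟩ => ?_⟩
  · obtain ⟨n, -, hn⟩ := Finset.mem_image.mp hx
    exact ⟨n, hn⟩
  · refine Finset.mem_image.mpr ⟨n % orderOf (p : ZMod d), ?_, by rw [pow_mod_orderOf, hn]⟩
    exact Finset.mem_range.mpr ((Nat.mod_lt _ (orderOf_natCast_pos_of_coprime hpd)).trans_le
      (orderOf_natCast_le_of_coprime hpd))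

theorem mem_orb_self (p : ℕ) (i : ZMod d) : i ∈ orb p d i :=
  Finset.mem_image.mpr ⟨0, Finset.mem_range.mpr (NeZero.pos d), by rw [pow_zero, one_mul]⟩

theorem orb_eq_of_mem (hpd : p.Coprime d) {i j : ZMod d} (hj : j ∈ orb p d i) :
    orb p d j = orb p d i := by
  obtain ⟨a, rfl⟩ := (mem_orb_iff hpd).mp hj
  set k := orderOf (p : ZMod d)
  have hback : (p : ZMod d) ^ (a * k - a) * ((p : ZMod d) ^ a * i) = i := by
    rw [← mul_assoc, pow_sub_mul_pow _ (Nat.le_mul_of_pos_right a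
      (orderOf_natCast_pos_of_coprime hpd)), pow_mul', pow_orderOf_eq_one, one_pow, one_mul]
  ext x
  simp only [mem_orb_iff hpd]
  constructor
  · rintro ⟨n, rfl⟩
    exact ⟨n + a, by rw [pow_add, mul_assoc]⟩
  · rintro ⟨n, rfl⟩
    exact ⟨n + (a * k - a), by rw [pow_add, mul_assoc, hback]⟩

theorem mem_orb_iff_orb_eq (hpd : p.Coprime d) {i j : ZMod d} :
    j ∈ orb p d i ↔ orb p d j = orb p d i :=
  ⟨orb_eq_of_mem hpd, fun h => h ▸ mem_orb_self p j⟩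

theorem natCast_mul_mem_orb_iff (hpd : p.Coprime d) {i x : ZMod d} :
    (p : ZMod d) * x ∈ orb p d i ↔ x ∈ orb p d i := by
  have hpx : orb p d ((p : ZMod d) * x) = orb p d x :=
    orb_eq_of_mem hpd ((mem_orb_iff hpd).mpr ⟨1, by rw [pow_one]⟩)
  rw [mem_orb_iff_orb_eq hpd, mem_orb_iff_orb_eq hpd, hpx]

theorem pairwiseDisjoint_orbitsAll (hpd : p.Coprime d) :
    (orbitsAll p d : Set (Finset (ZMod d))).PairwiseDisjoint id := by
  simp only [orbitsAll, Finset.coe_image, Finset.coe_univ, Set.image_univ]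
  rintro _ ⟨i, rfl⟩ _ ⟨j, rfl⟩ hij
  refine Finset.disjoint_left.mpr fun x hi hj => hij ?_
  exact (orb_eq_of_mem hpd hi).symm.trans (orb_eq_of_mem hpd hj)

theorem sum_orbitsAll {M : Type*} [AddCommMonoid M] (hpd : p.Coprime d) (f : ZMod d → M) :
    ∑ o ∈ orbitsAll p d, ∑ i ∈ o, f i = ∑ i, f i := by
  refine (Finset.sum_biUnion (pairwiseDisjoint_orbitsAll hpd)).symm.trans ?_
  congr
  exact Finset.eq_univ_of_forall fun i =>
    Finset.mem_biUnion.mpr ⟨orb p d i, Finset.mem_image_of_mem _ (Finset.mem_univ i),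
      mem_orb_self p i⟩

end Orbits

namespace WittVector

variable (p : ℕ) [Fact p.Prime] {R : Type*} [CommRing R]

theorem teichmuller_injective : Function.Injective (teichmuller p : R →* WittVector p R) :=
  fun x y h => by simpa using congrArg (·.coeff 0) h

theorem frobenius_teichmuller [CharP R p] (x : R) :
    frobenius (teichmuller p x) = teichmuller p x ^ p := by
  rw [frobenius_eq_map_frobenius, map_teichmuller, frobenius_def, map_pow]

def teichmullerChar {H : Type*} [Monoid H] (χ : H →* Rˣ) : H →* (WittVector p R)ˣ :=
  (Units.map (teichmuller p)).comp χ

theorem teichmullerChar_injective {H : Type*} [Monoid H] {χ : H →* Rˣ}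
    (hχ : Function.Injective χ) : Function.Injective (teichmullerChar p χ) :=
  (Units.map_injective (teichmuller_injective p)).comp hχ

theorem frobenius_sum_teichmuller_pow_zmod_val [CharP R p] {d : ℕ} [NeZero d]
    (hpd : p.Coprime d) {x : R} (hx : x ^ d = 1) {o : Finset (ZMod d)} (ho : o ∈ orbitsAll p d) :
    frobenius (∑ i ∈ o, teichmuller p x ^ i.val) = ∑ i ∈ o, teichmuller p x ^ i.val := by
  obtain ⟨a, -, rfl⟩ := Finset.mem_image.mp ho
  have hτ : teichmuller p x ^ d = 1 := by rw [← map_pow, hx, map_one]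
  rw [map_sum]
  refine Finset.sum_equiv (Units.mulLeft (ZMod.unitOfCoprime p hpd)) (fun i => ?_) fun i _ => ?_
  · rw [Units.mulLeft_apply, ZMod.coe_unitOfCoprime, natCast_mul_mem_orb_iff hpd]
  · rw [Units.mulLeft_apply, ZMod.coe_unitOfCoprime, map_pow, frobenius_teichmuller, ← pow_mul,
      ← pow_zmod_val_natCast hτ, Nat.cast_mul, ZMod.natCast_zmod_val]

variable {K : Type*} [Field K] [Algebra (ZMod p) K]

theorem algebraMap_padicInt_injective : Function.Injective (algebraMap ℤ_[p] (WittVector p K)) :=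
  (map_injective _ (algebraMap (ZMod p) K).injective).comp (WittVector.equiv p).symm.injective

theorem mem_range_algebraMap_padicInt_of_frobenius_eq {x : WittVector p K}
    (hx : frobenius x = x) : x ∈ (algebraMap ℤ_[p] (WittVector p K)).range := by
  have := charP_of_injective_algebraMap (algebraMap (ZMod p) K).injective p
  have hcoeff (n : ℕ) : x.coeff n ∈ (algebraMap (ZMod p) K).range := by
    have h := (Subfield.mem_bot_iff_pow_eq_self K p (x := x.coeff n)).mpr
      (by rw [← coeff_frobenius_charP p x n, hx])
    rwa [← ZMod.fieldRange_castHom_eq_bot p, Subsingleton.elim (ZMod.castHom dvd_rfl K)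
      (algebraMap (ZMod p) K)] at h
  choose b hb using hcoeff
  refine ⟨WittVector.equiv p (mk p b), ext fun n => ?_⟩
  simp [RingHom.algebraMap_toAlgebra, hb]

theorem isUnit_natCast_of_coprime {d : ℕ} (hpd : p.Coprime d) : IsUnit (d : WittVector p K) := by
  simpa using (PadicInt.isUnit_natCast_of_coprime hpd).map (algebraMap ℤ_[p] (WittVector p K))

end WittVector

section GroupAlgebraRank

open MonoidAlgebra LinearMap

variable {R A G : Type*} [CommRing R] [CommRing A] [Algebra R A]

theorem MonoidAlgebra.mapAlgHom_injective [Monoid G] {B : Type*} [CommRing B] [Algebra R B]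
    {f : A →ₐ[R] B} (hf : Function.Injective f) : Function.Injective (mapAlgHom G f) :=
  fun x y h => MonoidAlgebra.ext <| Finsupp.ext fun g => hf <| by
    rw [← coeff_mapAlgHom, h, coeff_mapAlgHom]

theorem exists_mapAlgHom_ofId_eq [Monoid G] [Finite G] {x : MonoidAlgebra A G}
    (hx : ∀ g, x.coeff g ∈ (algebraMap R A).range) :
    ∃ y, mapAlgHom G (Algebra.ofId R A) y = x := by
  choose z hz using hx
  exact ⟨ofCoeff (Finsupp.equivFunOnFinite.symm z),
    MonoidAlgebra.ext <| Finsupp.ext fun g => by simp [hz]⟩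

theorem span_range_single_one_eq_range_mapAlgHom [Monoid G] :
    Submodule.span R (Set.range fun g : G => single g (1 : A)) =
      range (mapAlgHom G (Algebra.ofId R A)).toLinearMap := by
  rw [range_eq_map, ← (MonoidAlgebra.basis G R).span_eq, Submodule.map_span, ← Set.range_comp]
  congr
  ext g
  simp

theorem map_mulLeft_span_range_single_one [Monoid G] (e : MonoidAlgebra R G) :
    (Submodule.span R (Set.range fun g : G => single g (1 : A))).map
        (mulLeft R (mapAlgHom G (Algebra.ofId R A) e)) =
      (range (mulLeft R e)).map (mapAlgHom G (Algebra.ofId R A)).toLinearMap := by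
  rw [span_range_single_one_eq_range_mapAlgHom, range_eq_map, range_eq_map, ← Submodule.map_comp,
    ← Submodule.map_comp]
  congr 1
  ext x
  simp

variable [Group G] [Fintype G]

theorem MonoidAlgebra.trace_mulLeft (x : MonoidAlgebra R G) :
    trace R (MonoidAlgebra R G) (mulLeft R x) = Fintype.card G • x.coeff 1 := by
  classical
  rw [trace_eq_matrix_trace R (MonoidAlgebra.basis G R), Matrix.trace]
  simp only [Matrix.diag, LinearMap.toMatrix_apply, mulLeft_apply, basis_apply]
  change ∑ g, (x * single g 1).coeff g = _
  simp

variable [IsDomain R] [IsPrincipalIdealRing R]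

theorem IsIdempotentElem.finrank_range_mulLeft {e : MonoidAlgebra R G} (he : IsIdempotentElem e) :
    (Module.finrank R (range (mulLeft R e)) : R) = Fintype.card G • e.coeff 1 := by
  have : IsIdempotentElem (mulLeft R e) := he.map (Algebra.lmul R (MonoidAlgebra R G))
  rw [← trace_mulLeft, this.isProj_range.trace]

theorem free_and_finrank_map_mulLeft_span_range_single_one
    (hinj : Function.Injective (algebraMap R A)) {e : MonoidAlgebra R G}
    (he : IsIdempotentElem e) :
    let Γ := (Submodule.span R (Set.range fun g : G => single g (1 : A))).map
      (mulLeft R (mapAlgHom G (Algebra.ofId R A) e))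
    Module.Free R Γ ∧ (Module.finrank R Γ : R) = Fintype.card G • e.coeff 1 := by
  intro Γ
  let φ := Submodule.equivMapOfInjective (mapAlgHom G (Algebra.ofId R A)).toLinearMap
    (MonoidAlgebra.mapAlgHom_injective (f := Algebra.ofId R A) hinj) (range (mulLeft R e))
  rw [show Γ = _ from map_mulLeft_span_range_single_one e]
  exact ⟨Module.Free.of_equiv φ, by rw [← φ.finrank_eq, he.finrank_range_mulLeft]⟩

end GroupAlgebraRank

section PiIdem

open MonoidAlgebra WittVector

variable {p d : ℕ} [Fact p.Prime] [NeZero d] {H : Type} [CommGroup H] [Fintype H]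
  {χ : H →* (AlgebraicClosure (ZMod p))ˣ}

local notation "K̄" => AlgebraicClosure (ZMod p)
local notation "W" => WittVector p K̄

theorem piIdem_eq_sum_charIdem (o : Finset (ZMod d)) :
    piIdem p d χ o = ∑ i ∈ o, charIdem (teichmullerChar p χ⁻¹) d i := by
  simp only [piIdem, charIdem, Finset.mul_sum]
  rw [Finset.sum_comm]
  refine Finset.sum_congr rfl fun h _ => ?_
  refine (map_sum (singleAddHom h) _ _).trans (Finset.sum_congr rfl fun i _ => ?_)
  simp only [singleAddHom_apply, Units.val_pow_eq_pow_val, map_pow]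
  rfl

theorem coeff_piIdem (o : Finset (ZMod d)) (h : H) :
    (piIdem p d χ o).coeff h = Ring.inverse (d : W) *
      ∑ i ∈ o, teichmuller p (((χ h)⁻¹ : K̄ˣ) : K̄) ^ i.val := by
  simp only [piIdem, coeff_sum, coeff_single, Finsupp.coe_finsetSum, Finset.sum_apply,
    Finsupp.single_apply, Finset.sum_ite_eq', Finset.mem_univ, if_true, Units.val_pow_eq_pow_val,
    map_pow]

theorem coeff_piIdem_mem_range (hpd : p.Coprime d) (hcard : Fintype.card H = d)
    {o : Finset (ZMod d)} (ho : o ∈ orbitsAll p d) (h : H) :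
    (piIdem p d χ o).coeff h ∈ (algebraMap ℤ_[p] W).range := by
  have hroot : (((χ h)⁻¹ : K̄ˣ) : K̄) ^ d = 1 := by
    rw [← Units.val_pow_eq_pow_val, ← map_inv, ← map_pow, ← hcard, pow_card_eq_one, map_one,
      Units.val_one]
  rw [coeff_piIdem, ← map_natCast (algebraMap ℤ_[p] _),
    ← map_ringInverse _ (PadicInt.isUnit_natCast_of_coprime hpd)]
  exact mul_mem ⟨_, rfl⟩ (mem_range_algebraMap_padicInt_of_frobenius_eq p
    (frobenius_sum_teichmuller_pow_zmod_val p hpd hroot ho))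

theorem free_and_finrank_map_mulLeft_piIdem (hpd : p.Coprime d) (hcard : Fintype.card H = d)
    {o : Finset (ZMod d)} (ho : o ∈ orbitsAll p d) (hidem : IsIdempotentElem (piIdem p d χ o)) :
    let Γ := (Submodule.span ℤ_[p] (Set.range fun h : H => single h (1 : W))).map
      (LinearMap.mulLeft ℤ_[p] (piIdem p d χ o))
    Module.Free ℤ_[p] Γ ∧ Module.finrank ℤ_[p] Γ = o.card := by
  have hinj := algebraMap_padicInt_injective p (K := K̄)
  obtain ⟨e, hπe⟩ := exists_mapAlgHom_ofId_eq (coeff_piIdem_mem_range hpd hcard ho)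
  have heidem : IsIdempotentElem e := MonoidAlgebra.mapAlgHom_injective hinj <| by
    rw [map_mul, hπe, hidem.eq]
  obtain ⟨hfree, hrank⟩ := free_and_finrank_map_mulLeft_span_range_single_one hinj heidem
  rw [hπe] at hfree hrank
  refine ⟨hfree, Nat.cast_injective (R := ℤ_[p]) (hinj ?_)⟩
  have hcoeff₁ : algebraMap ℤ_[p] _ (e.coeff 1) = (piIdem p d χ o).coeff 1 := by
    rw [← hπe, MonoidAlgebra.coeff_mapAlgHom]
    rfl
  rw [hrank, map_nsmul, hcoeff₁, coeff_piIdem, map_natCast]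
  simp only [map_one, inv_one, Units.val_one, one_pow, Finset.sum_const, nsmul_eq_mul, mul_one,
    hcard]
  rw [← mul_assoc, Ring.mul_inverse_cancel _ (isUnit_natCast_of_coprime p hpd), one_mul]

end PiIdem

theorem piIdem_orthogonal_idempotents_general (p d : ℕ) [Fact p.Prime] [NeZero d]
    (hpd : ¬ p ∣ d) {H : Type} [CommGroup H] [Fintype H]
    (hcard : Fintype.card H = d) (χ : H →* (AlgebraicClosure (ZMod p))ˣ)
    (hχ : Function.Injective χ) :
    (∀ o ∈ orbitsAll p d, piIdem p d χ o * piIdem p d χ o = piIdem p d χ o) ∧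
    (∀ o ∈ orbitsAll p d, ∀ o' ∈ orbitsAll p d, o ≠ o' →
      piIdem p d χ o * piIdem p d χ o' = 0) ∧
    (∑ o ∈ orbitsAll p d, piIdem p d χ o = 1) ∧
    (∀ o ∈ orbitsAll p d, ∀ h : H,
      (piIdem p d χ o).coeff h ∈
        (algebraMap ℤ_[p] (WittVector p (AlgebraicClosure (ZMod p)))).range) ∧
    (∀ o ∈ orbitsAll p d,
      Module.Free ℤ_[p]
        (Submodule.map (LinearMap.mulLeft ℤ_[p] (piIdem p d χ o))
          (Submodule.span ℤ_[p] (Set.range fun h : H =>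
            (MonoidAlgebra.single h (1 : WittVector p (AlgebraicClosure (ZMod p))))))) ∧
      Module.finrank ℤ_[p]
        (Submodule.map (LinearMap.mulLeft ℤ_[p] (piIdem p d χ o))
          (Submodule.span ℤ_[p] (Set.range fun h : H =>
            (MonoidAlgebra.single h (1 : WittVector p (AlgebraicClosure (ZMod p)))))))
        = o.card) := by
  have hcop : p.Coprime d := (Nat.Prime.coprime_iff_not_dvd Fact.out).mpr hpd
  have he := completeOrthogonalIdempotents_charIdem
    (WittVector.teichmullerChar_injective p (χ := χ⁻¹) fun a b hab => hχ (inv_injective hab))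
    hcard (WittVector.isUnit_natCast_of_coprime p hcop)
  have hidem (o : Finset (ZMod d)) : IsIdempotentElem (piIdem p d χ o) := by
    rw [piIdem_eq_sum_charIdem]
    exact he.isIdempotentElem_sum
  refine ⟨fun o _ => hidem o, fun o ho o' ho' hne => ?_, ?_,
    fun o ho => coeff_piIdem_mem_range hcop hcard ho,
    fun o ho => free_and_finrank_map_mulLeft_piIdem hcop hcard ho (hidem o)⟩
  · rw [piIdem_eq_sum_charIdem, piIdem_eq_sum_charIdem]
    exact he.sum_mul_sum_of_disjoint (pairwiseDisjoint_orbitsAll hcop ho ho' hne)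
  · simp only [piIdem_eq_sum_charIdem]
    rw [sum_orbitsAll hcop, he.complete]

/-- the elements `π_o`, as `o` ranges over the orbits of `⟨p⟩` on `ℤ/dℤ`,
form a complete system of orthogonal idempotents of `W[H]`; all their coefficients lie
in the image of `ℤ_p` in `W`; and for each orbit `o` the `ℤ_p`-module
`Γ_o = π_o·ℤ_p[H]` is free of rank `|o|`. -/
theorem piIdem_orthogonal_idempotents (p d : ℕ) [Fact p.Prime] [NeZero d]
    (hpd : ¬ p ∣ d) {H : Type} [CommGroup H] [Fintype H] (hcyc : IsCyclic H)
    (hcard : Fintype.card H = d) (χ : H →* (AlgebraicClosure (ZMod p))ˣ)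
    (hχ : Function.Injective χ) :
    (∀ o ∈ orbitsAll p d, piIdem p d χ o * piIdem p d χ o = piIdem p d χ o) ∧
    (∀ o ∈ orbitsAll p d, ∀ o' ∈ orbitsAll p d, o ≠ o' →
      piIdem p d χ o * piIdem p d χ o' = 0) ∧
    (∑ o ∈ orbitsAll p d, piIdem p d χ o = 1) ∧
    (∀ o ∈ orbitsAll p d, ∀ h : H,
      (piIdem p d χ o).coeff h ∈
        (algebraMap ℤ_[p] (WittVector p (AlgebraicClosure (ZMod p)))).range) ∧
    (∀ o ∈ orbitsAll p d,
      Module.Free ℤ_[p]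
        (Submodule.map (LinearMap.mulLeft ℤ_[p] (piIdem p d χ o))
          (Submodule.span ℤ_[p] (Set.range fun h : H =>
            (MonoidAlgebra.single h (1 : WittVector p (AlgebraicClosure (ZMod p))))))) ∧
      Module.finrank ℤ_[p]
        (Submodule.map (LinearMap.mulLeft ℤ_[p] (piIdem p d χ o))
          (Submodule.span ℤ_[p] (Set.range fun h : H =>
            (MonoidAlgebra.single h (1 : WittVector p (AlgebraicClosure (ZMod p)))))))
        = o.card) :=
  piIdem_orthogonal_idempotents_general p d hpd hcard χ hχ

end
end

section
/- Let k > 1 and let e_1,…,e_{2k−1} be positive integers. Choose an index i with e_i = min{e_1,…,e_{2k−1}}, and define B' = B(e_3,…,e_{2k−1}) if i = 1; B' = B(e_1,…,e_{i−2}, e_{i−1}−e_i+e_{i+1}, e_{i+2},…,e_{2k−1}) if 1 < i < 2k−1; and B' = B(e_1,…,e_{2k−3}) if i = 2k−1. Then B(e_1,…,e_{2k−1}) is equivalent to the block-diagonal matrix (p^{e_i}) ⊕ B'. Moreover the greatest common divisor of the entries of B(e_1,…,e_{2k−1}) (equivalently, its first invariant factor) is p^{min{e_1,…,e_{2k−1}}}.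 -/
/-- The `k × k` upper-bidiagonal integer matrix with diagonal entries
`p^(e 1), p^(e 3), …, p^(e (2k−1))` and superdiagonal entries
`−p^(e 2), −p^(e 4), …, −p^(e (2k−2))` (indices of `e` are 1-based). -/
def Bmat (p k : ℕ) (e : ℕ → ℕ) : Matrix (Fin k) (Fin k) ℤ :=
  Matrix.of fun i j =>
    if (j : ℕ) = (i : ℕ) then (p : ℤ) ^ (e (2 * (i : ℕ) + 1))
    else if (j : ℕ) = (i : ℕ) + 1 then -(p : ℤ) ^ (e (2 * (i : ℕ) + 2))
    else 0

/-- Two square integer matrices (possibly indexed by different types of the same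
cardinality) are equivalent if one can be transformed into the other by integer
row and column operations, i.e. by left and right multiplication by matrices
invertible over `ℤ` (after an identification of the index types). -/
def MatEquiv {m n : Type} [Fintype m] [DecidableEq m] [Fintype n] [DecidableEq n]
    (M : Matrix m m ℤ) (N : Matrix n n ℤ) : Prop :=
  ∃ (σ : m ≃ n) (P Q : (Matrix n n ℤ)ˣ),
    N = (P : Matrix n n ℤ) * (Matrix.reindex σ σ M) * (Q : Matrix n n ℤ)

/-!
Every entry of `B` is `0` or `±p^(e j)`, so `p^(e i)` divides all of them and the entry
`±p^(e i)` can serve as a pivot. Clearing its row and column by integer row and column operations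
is a Schur-complement step, and since the pivot row and column each have a single other nonzero
entry, it changes only one entry of the complementary minor: the product of the two neighbours
divided by the pivot, `p^(e (i-1) - e i + e (i+1))`, which is the merged exponent of `B'`.
The gcd statement follows because `p^(e i)` divides every entry and is itself an entry up to sign.
-/

open Matrix

theorem Matrix.fromBlocks_elimination {l m n R : Type*} [Fintype l] [DecidableEq l]
    [Fintype m] [DecidableEq m] [Fintype n] [DecidableEq n] [Ring R]
    (A : Matrix l l R) (X : Matrix l n R) (Y : Matrix m l R) (D : Matrix m n R) :
    (fromBlocks 1 0 (-Y) 1 : Matrix (l ⊕ m) (l ⊕ m) R) * fromBlocks A (A * X) (Y * A) D *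
        (fromBlocks 1 (-X) 0 1 : Matrix (l ⊕ n) (l ⊕ n) R) =
      fromBlocks A 0 0 (D - Y * A * X) := by
  simp [fromBlocks_multiply, Matrix.mul_assoc, sub_eq_neg_add]

section MatEquiv

variable {m n : Type} [Fintype m] [DecidableEq m] [Fintype n] [DecidableEq n]

theorem matEquiv_mul_reindex_mul {M : Matrix m m ℤ} {P Q : Matrix n n ℤ} (hP : IsUnit P)
    (hQ : IsUnit Q) (σ τ : m ≃ n) : MatEquiv M (P * reindex σ τ M * Q) := by
  have hperm : reindex σ τ M = reindex σ σ M * (σ.symm.trans τ).toPEquiv.toMatrix := by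
    rw [PEquiv.mul_toMatrix_toPEquiv]
    ext i j
    simp
  have hunit : IsUnit ((σ.symm.trans τ).toPEquiv.toMatrix : Matrix n n ℤ) := by
    simp [isUnit_iff_isUnit_det]
  refine ⟨σ, hP.unit, (hunit.mul hQ).unit, ?_⟩
  simp [hperm, Matrix.mul_assoc]

theorem MatEquiv.mul_left {M : Matrix m m ℤ} {N P : Matrix n n ℤ} (h : MatEquiv M N)
    (hP : IsUnit P) : MatEquiv M (P * N) := by
  obtain ⟨σ, P₀, Q₀, rfl⟩ := h
  exact ⟨σ, hP.unit * P₀, Q₀, by simp [Matrix.mul_assoc]⟩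

end MatEquiv

def finOneSumSuccAboveEquiv {k : ℕ} (a : Fin (k + 1)) : Fin 1 ⊕ Fin k ≃ Fin (k + 1) :=
  (Equiv.sumCongr (Equiv.equivPUnit.{1, 1} (Fin 1)) (Equiv.refl _)).trans <|
    (Equiv.sumComm _ _).trans <| (Equiv.optionEquivSumPUnit _).symm.trans (finSuccEquiv' a).symm

@[simp] theorem finOneSumSuccAboveEquiv_inl {k : ℕ} (a : Fin (k + 1)) (i : Fin 1) :
    finOneSumSuccAboveEquiv a (.inl i) = a := by
  simp [finOneSumSuccAboveEquiv]

@[simp] theorem finOneSumSuccAboveEquiv_inr {k : ℕ} (a : Fin (k + 1)) (s : Fin k) :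
    finOneSumSuccAboveEquiv a (.inr s) = a.succAbove s := by
  simp [finOneSumSuccAboveEquiv]

theorem Fin.val_succAbove {k : ℕ} (a : Fin (k + 1)) (s : Fin k) :
    (a.succAbove s : ℕ) = if (s : ℕ) < a then (s : ℕ) else (s : ℕ) + 1 := by
  unfold Fin.succAbove
  split_ifs <;> simp_all [Fin.lt_def]

theorem matEquiv_fromBlocks_of_pivot {k : ℕ} (M : Matrix (Fin (k + 1)) (Fin (k + 1)) ℤ)
    (a b : Fin (k + 1)) (d : ℤ) (x y : Fin k → ℤ) (D : Matrix (Fin k) (Fin k) ℤ)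
    (hd : M a b = d) (hrow : ∀ s, M a (b.succAbove s) = d * x s)
    (hcol : ∀ r, M (a.succAbove r) b = y r * d)
    (hD : ∀ r s, D r s = M (a.succAbove r) (b.succAbove s) - y r * d * x s) :
    MatEquiv M (fromBlocks !![d] 0 0 D) := by
  set A : Matrix (Fin 1) (Fin 1) ℤ := !![d]
  set X : Matrix (Fin 1) (Fin k) ℤ := of fun _ s => x s
  set Y : Matrix (Fin k) (Fin 1) ℤ := of fun r _ => y r
  have hblocks : reindex (finOneSumSuccAboveEquiv a).symm (finOneSumSuccAboveEquiv b).symm M =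
      fromBlocks A (A * X) (Y * A) (of fun r s => M (a.succAbove r) (b.succAbove s)) := by
    ext (i | r) (j | s) <;> simp [A, X, Y, hd, hrow, hcol, mul_apply, Fin.fin_one_eq_zero]
  have hschur : (of fun r s => M (a.succAbove r) (b.succAbove s)) - Y * A * X = D := by
    ext r s
    simp [A, X, Y, hD, mul_apply]
  rw [← hschur, ← fromBlocks_elimination, ← hblocks]
  exact matEquiv_mul_reindex_mul (by simp) (by simp) _ _

section Bmat

variable (p : ℕ) (e : ℕ → ℕ)

theorem Bmat_succ_succ (k : ℕ) (r s : Fin k) :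
    Bmat p (k + 1) e r.succ s.succ = Bmat p k (fun j => e (j + 2)) r s := by
  simp only [Bmat, of_apply, Fin.val_succ]
  grind

theorem Bmat_castSucc_castSucc (k : ℕ) (r s : Fin k) :
    Bmat p (k + 1) e r.castSucc s.castSucc = Bmat p k e r s := by
  simp [Bmat]

theorem matEquiv_Bmat_pivot_first (n : ℕ) (h : e 1 ≤ e 2) :
    MatEquiv (Bmat p (n + 2) e)
      (fromBlocks !![(p : ℤ) ^ e 1] 0 0 (Bmat p (n + 1) (fun j => e (j + 2)))) := by
  refine matEquiv_fromBlocks_of_pivot _ 0 0 _ (Pi.single 0 (-(p : ℤ) ^ (e 2 - e 1))) 0 _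
    (by simp [Bmat]) (fun s => ?_) (fun r => by simp [Bmat]) (fun r s => by simp [Bmat_succ_succ])
  rcases Fin.eq_zero_or_eq_succ s with rfl | ⟨s, rfl⟩
  · simp [Bmat, ← pow_add, Nat.add_sub_cancel' h]
  · simp [Bmat]

theorem matEquiv_Bmat_pivot_last (n : ℕ) (h : e (2 * n + 3) ≤ e (2 * n + 2)) :
    MatEquiv (Bmat p (n + 2) e)
      (fromBlocks !![(p : ℤ) ^ e (2 * n + 3)] 0 0 (Bmat p (n + 1) e)) := by
  refine matEquiv_fromBlocks_of_pivot _ (Fin.last _) (Fin.last _) _ 0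
    (Pi.single (Fin.last n) (-(p : ℤ) ^ (e (2 * n + 2) - e (2 * n + 3))))  _
    (by simp [Bmat]; grind) (fun s => by simp [Bmat]; grind) (fun r => ?_)
    (fun r s => by simp [Bmat_castSucc_castSucc])
  rcases Fin.eq_castSucc_or_eq_last r with ⟨r, rfl⟩ | rfl
  · simp [Bmat]; grind
  · simp [Bmat, ← pow_add, Nat.sub_add_cancel h]

def mergeExponents (e : ℕ → ℕ) (i : ℕ) : ℕ → ℕ := fun j =>
  if j < i - 1 then e j else if j = i - 1 then e (i - 1) - e i + e (i + 1) else e (j + 2)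

theorem matEquiv_Bmat_pivot_diag (n m : ℕ) (hm : 1 ≤ m) (hmn : m ≤ n)
    (h₁ : e (2 * m + 1) ≤ e (2 * m)) (h₂ : e (2 * m + 1) ≤ e (2 * m + 2)) :
    MatEquiv (Bmat p (n + 2) e) (fromBlocks !![(p : ℤ) ^ e (2 * m + 1)] 0 0
      (Bmat p (n + 1) (mergeExponents e (2 * m + 1)))) := by
  refine matEquiv_fromBlocks_of_pivot _ ⟨m, by omega⟩ ⟨m, by omega⟩ _
    (Pi.single ⟨m, by omega⟩ (-(p : ℤ) ^ (e (2 * m + 2) - e (2 * m + 1))))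
    (Pi.single ⟨m - 1, by omega⟩ (-(p : ℤ) ^ (e (2 * m) - e (2 * m + 1)))) _
    (by simp [Bmat]) (fun s => ?_) (fun r => ?_) (fun r s => ?_) <;>
  simp only [Bmat, mergeExponents, of_apply, Fin.val_succAbove, Pi.single_apply, Fin.ext_iff] <;>
  grind [pow_sub_mul_pow, pow_add]

theorem matEquiv_Bmat_pivot_superdiag (n m : ℕ) (hm : 1 ≤ m) (hmn : m ≤ n + 1)
    (h₁ : e (2 * m) ≤ e (2 * m - 1)) (h₂ : e (2 * m) ≤ e (2 * m + 1)) :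
    MatEquiv (Bmat p (n + 2) e) (fromBlocks !![(p : ℤ) ^ e (2 * m)] 0 0
      (Bmat p (n + 1) (mergeExponents e (2 * m)))) := by
  have hneg : MatEquiv (Bmat p (n + 2) e) (fromBlocks !![-(p : ℤ) ^ e (2 * m)] 0 0
      (Bmat p (n + 1) (mergeExponents e (2 * m)))) := by
    refine matEquiv_fromBlocks_of_pivot _ ⟨m - 1, by omega⟩ ⟨m, by omega⟩ _
      (Pi.single ⟨m - 1, by omega⟩ (-(p : ℤ) ^ (e (2 * m - 1) - e (2 * m))))
      (Pi.single ⟨m - 1, by omega⟩ (-(p : ℤ) ^ (e (2 * m + 1) - e (2 * m)))) _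
      (by simp [Bmat]; grind) (fun s => ?_) (fun r => ?_) (fun r s => ?_) <;>
    simp only [Bmat, mergeExponents, of_apply, Fin.val_succAbove, Pi.single_apply, Fin.ext_iff] <;>
    grind [pow_sub_mul_pow, pow_add]
  convert hneg.mul_left (P := fromBlocks (-1) 0 0 1) (by simp) using 1
  simp [fromBlocks_multiply]

theorem pow_dvd_Bmat_apply {k d : ℕ} (hd : ∀ j, 1 ≤ j → j ≤ 2 * k - 1 → d ≤ e j) (r s : Fin k) :
    (p : ℤ) ^ d ∣ Bmat p k e r s := by
  simp only [Bmat, of_apply]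
  split_ifs
  · exact pow_dvd_pow _ (hd _ (by omega) (by omega))
  · exact (pow_dvd_pow _ (hd _ (by omega) (by omega))).neg_right
  · exact dvd_zero _

theorem exists_Bmat_apply_dvd {k i : ℕ} (hi₁ : 1 ≤ i) (hi₂ : i ≤ 2 * k - 1) :
    ∃ r s : Fin k, Bmat p k e r s ∣ (p : ℤ) ^ e i := by
  obtain ⟨m, rfl | rfl⟩ := Nat.even_or_odd' i
  · obtain ⟨m, rfl⟩ : ∃ m', m = m' + 1 := ⟨m - 1, by omega⟩
    exact ⟨⟨m, by omega⟩, ⟨m + 1, by omega⟩, by simp [Bmat, Nat.mul_succ]⟩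
  · exact ⟨⟨m, by omega⟩, ⟨m, by omega⟩, by simp [Bmat]⟩

theorem gcd_Bmat {k i : ℕ} (hi₁ : 1 ≤ i) (hi₂ : i ≤ 2 * k - 1)
    (hmin : ∀ j, 1 ≤ j → j ≤ 2 * k - 1 → e i ≤ e j) :
    Finset.univ.gcd (fun rs : Fin k × Fin k => Bmat p k e rs.1 rs.2) = (p : ℤ) ^ e i := by
  obtain ⟨r, s, hrs⟩ := exists_Bmat_apply_dvd p e hi₁ hi₂
  refine dvd_antisymm_of_normalize_eq Finset.normalize_gcd
    (Int.normalize_of_nonneg (by positivity)) ?_ ?_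
  · exact (Finset.gcd_dvd (Finset.mem_univ (r, s))).trans hrs
  · exact Finset.dvd_gcd fun rs _ => pow_dvd_Bmat_apply p e hmin rs.1 rs.2

end Bmat

theorem bidiagonal_first_invariant_factor_general (p : ℕ) (n : ℕ) (e : ℕ → ℕ)
    (i : ℕ) (hi1 : 1 ≤ i) (hi2 : i ≤ 2 * (n + 2) - 1)
    (hmin : ∀ j, 1 ≤ j → j ≤ 2 * (n + 2) - 1 → e i ≤ e j) :
    (i = 1 →
      MatEquiv (Bmat p (n + 2) e)
        (Matrix.fromBlocks !![(p : ℤ) ^ (e 1)] 0 0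
          (Bmat p (n + 1) (fun j => e (j + 2))))) ∧
    (1 < i → i < 2 * (n + 2) - 1 →
      MatEquiv (Bmat p (n + 2) e)
        (Matrix.fromBlocks !![(p : ℤ) ^ (e i)] 0 0
          (Bmat p (n + 1) (fun j =>
            if j < i - 1 then e j
            else if j = i - 1 then e (i - 1) - e i + e (i + 1)
            else e (j + 2))))) ∧
    (i = 2 * (n + 2) - 1 →
      MatEquiv (Bmat p (n + 2) e)
        (Matrix.fromBlocks !![(p : ℤ) ^ (e i)] 0 0 (Bmat p (n + 1) e))) ∧
    Finset.gcd Finset.univ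
        (fun ij : Fin (n + 2) × Fin (n + 2) => Bmat p (n + 2) e ij.1 ij.2)
      = (p : ℤ) ^ (e i) := by
  have hle : ∀ j, 1 ≤ j → j ≤ 2 * n + 3 → e i ≤ e j := fun j h₁ h₂ => hmin j h₁ (by omega)
  refine ⟨?_, fun h₁ h₂ => ?_, ?_, gcd_Bmat p e hi1 hi2 hmin⟩
  · rintro rfl
    exact matEquiv_Bmat_pivot_first p e n (hle 2 (by omega) (by omega))
  · obtain ⟨m, rfl | rfl⟩ := Nat.even_or_odd' i
    · exact matEquiv_Bmat_pivot_superdiag p e n m (by omega) (by omega)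
        (hle _ (by omega) (by omega)) (hle _ (by omega) (by omega))
    · exact matEquiv_Bmat_pivot_diag p e n m (by omega) (by omega)
        (hle _ (by omega) (by omega)) (hle _ (by omega) (by omega))
  · rintro rfl
    rw [show 2 * (n + 2) - 1 = 2 * n + 3 by omega]
    exact matEquiv_Bmat_pivot_last p e n (hle _ (by omega) (by omega))

/-- Lemma on first invariant factor: with `k = n + 2 > 1` and positive
integers `e 1, …, e (2k−1)`, if `e i` is minimal then `B(e 1,…,e (2k−1))` is equivalent
to `(p^(e i)) ⊕ B'` where `B'` is obtained by deleting/merging around index `i`; moreover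
the gcd of the entries of `B(e 1,…,e (2k−1))` is `p^(e i)`. -/
theorem bidiagonal_first_invariant_factor (p : ℕ) (hp : p.Prime) (n : ℕ) (e : ℕ → ℕ)
    (he : ∀ j, 1 ≤ j → j ≤ 2 * (n + 2) - 1 → 0 < e j)
    (i : ℕ) (hi1 : 1 ≤ i) (hi2 : i ≤ 2 * (n + 2) - 1)
    (hmin : ∀ j, 1 ≤ j → j ≤ 2 * (n + 2) - 1 → e i ≤ e j) :
    (i = 1 →
      MatEquiv (Bmat p (n + 2) e)
        (Matrix.fromBlocks !![(p : ℤ) ^ (e 1)] 0 0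
          (Bmat p (n + 1) (fun j => e (j + 2))))) ∧
    (1 < i → i < 2 * (n + 2) - 1 →
      MatEquiv (Bmat p (n + 2) e)
        (Matrix.fromBlocks !![(p : ℤ) ^ (e i)] 0 0
          (Bmat p (n + 1) (fun j =>
            if j < i - 1 then e j
            else if j = i - 1 then e (i - 1) - e i + e (i + 1)
            else e (j + 2))))) ∧
    (i = 2 * (n + 2) - 1 →
      MatEquiv (Bmat p (n + 2) e)
        (Matrix.fromBlocks !![(p : ℤ) ^ (e i)] 0 0 (Bmat p (n + 1) e))) ∧
    Finset.gcd Finset.univ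
        (fun ij : Fin (n + 2) × Fin (n + 2) => Bmat p (n + 2) e ij.1 ij.2)
      = (p : ℤ) ^ (e i) :=
  bidiagonal_first_invariant_factor_general p n e i hi1 hi2 hmin
end

section
/- Assume f ≥ 2. The number of elements i ∈ S whose pattern begins with the two letters lu equals ((p−1)/2)·((p^{f−1}+1)/2), and the number of i ∈ S whose pattern begins with the two letters ll equals ((p+1)/2)·((p^{f−1}−1)/2). -/
/-!
Put `q = p ^ (f - 1)`, so that `d = p q + 1` and `p q ≡ -1 (mod d)`. Through `n = (-i).val`,
the `i` with `-i ∈ A` correspond to `1 ≤ n ≤ (p q - 1) / 2`, and `-p i` has residue `p n mod d`.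
Writing `n = q a + b` with `1 ≤ b ≤ q` forces `a ≤ (p - 1) / 2`, and then `p n ≡ p b - a` with
`0 < p b - a < d`. This residue lies in the lower half exactly when `b ≤ (q - 1) / 2`, i.e. when
`n mod q` lies in the lower half of `ℤ/qℤ`, and otherwise strictly in the upper half. Counting
such `n` gives `((p + 1) / 2) ((q - 1) / 2)`; the remaining `n` give the other count.
-/

open Finset

abbrev IsLowerHalf (N m : ℕ) : Prop := 0 < m ∧ 2 * m < N

theorem card_filter_range_isLowerHalf (N : ℕ) :
    #{n ∈ range N | IsLowerHalf N n} = (N - 1) / 2 := by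
  have : (range N).filter (IsLowerHalf N) = Ico 1 ((N + 1) / 2) := by
    ext n
    simp only [mem_filter, mem_range, mem_Ico]
    omega
  rw [this, Nat.card_Ico]
  omega

theorem mul_mul_add_mod_mul_add_one {p q a b : ℕ} (h : a ≤ p * b) (h' : p * b < p * q + 1 + a) :
    p * (q * a + b) % (p * q + 1) = p * b - a := by
  have : p * (q * a + b) = (p * b - a) + (p * q + 1) * a := by
    zify [h]
    ring
  rw [this, Nat.add_mul_mod_self_left, Nat.mod_eq_of_lt (by omega)]

theorem isLowerHalf_mul_mod_or {p q n : ℕ} (hp : Odd p) (hq : Odd q)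
    (hn : IsLowerHalf (p * q + 1) n) :
    (IsLowerHalf q (n % q) → IsLowerHalf (p * q + 1) (p * n % (p * q + 1))) ∧
      (¬IsLowerHalf q (n % q) → p * q + 1 < 2 * (p * n % (p * q + 1))) := by
  obtain ⟨s, rfl⟩ := hp
  obtain ⟨t, rfl⟩ := hq
  obtain ⟨hn0, hnN⟩ := hn
  -- remainders taken in `[1, q]` rather than `[0, q)`, so that the residue below needs no case split
  obtain ⟨a, b, rfl, hb1, hbq⟩ : ∃ a b, n = (2 * t + 1) * a + b ∧ 1 ≤ b ∧ b ≤ 2 * t + 1 :=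
    ⟨(n - 1) / (2 * t + 1), (n - 1) % (2 * t + 1) + 1,
      by have := Nat.div_add_mod (n - 1) (2 * t + 1); omega,
      by omega, by have := Nat.mod_lt (n - 1) (show 2 * t + 1 > 0 by omega); omega⟩
  have ha : a ≤ s := by nlinarith
  have hmod : ((2 * t + 1) * a + b) % (2 * t + 1) = b % (2 * t + 1) := Nat.mul_add_mod _ _ _
  have hab : a ≤ (2 * s + 1) * b := by nlinarith
  rw [hmod, mul_mul_add_mod_mul_add_one hab (by nlinarith)]
  obtain ⟨r, hr⟩ : ∃ r, (2 * s + 1) * b = r + a := ⟨_, (Nat.sub_add_cancel hab).symm⟩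
  rw [hr, Nat.add_sub_cancel]
  refine ⟨fun ⟨h0, h2⟩ => ?_, fun h => ?_⟩
  · have hbt : b ≤ t := by
      rcases hbq.lt_or_eq with hlt | rfl
      · rw [Nat.mod_eq_of_lt hlt] at h2; omega
      · simp at h0
    constructor <;> nlinarith
  · have hbt : t + 1 ≤ b := by
      rcases hbq.lt_or_eq with hlt | rfl
      · rw [Nat.mod_eq_of_lt hlt] at h; omega
      · omega
    nlinarith

theorem isLowerHalf_mul_mod_iff {p q n : ℕ} (hp : Odd p) (hq : Odd q)
    (hn : IsLowerHalf (p * q + 1) n) :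
    IsLowerHalf (p * q + 1) (p * n % (p * q + 1)) ↔ IsLowerHalf q (n % q) := by
  obtain ⟨hlower, hupper⟩ := isLowerHalf_mul_mod_or hp hq hn
  refine ⟨fun h => ?_, hlower⟩
  by_contra h'
  have := hupper h'
  omega

theorem lt_two_mul_mul_mod_iff {p q n : ℕ} (hp : Odd p) (hq : Odd q)
    (hn : IsLowerHalf (p * q + 1) n) :
    p * q + 1 < 2 * (p * n % (p * q + 1)) ↔ ¬IsLowerHalf q (n % q) := by
  obtain ⟨hlower, hupper⟩ := isLowerHalf_mul_mod_or hp hq hn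
  refine ⟨fun h h' => ?_, hupper⟩
  have := hlower h'
  omega

theorem card_isLowerHalf_mod {p q : ℕ} (hp : Odd p) (hq : Odd q) :
    #{n ∈ range (p * q + 1) | IsLowerHalf (p * q + 1) n ∧ IsLowerHalf q (n % q)} =
      (p + 1) / 2 * ((q - 1) / 2) := by
  obtain ⟨s, rfl⟩ := hp
  obtain ⟨t, rfl⟩ := hq
  have hq0 : 0 < 2 * t + 1 := by omega
  rw [show (2 * s + 1 + 1) / 2 = s + 1 by omega, show (2 * t + 1 - 1) / 2 = t by omega,
    show (s + 1) * t = #(range (s + 1) ×ˢ Icc 1 t) by simp]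
  apply card_nbij' (fun n => (n / (2 * t + 1), n % (2 * t + 1)))
    (fun ab => (2 * t + 1) * ab.1 + ab.2)
  · intro n hn
    simp only [coe_filter, mem_range, Set.mem_ofPred_eq, coe_product, coe_range, coe_Icc,
      Set.mem_prod, Set.mem_Iio, Set.mem_Icc] at hn ⊢
    obtain ⟨-, ⟨-, hnN⟩, h0, h2⟩ := hn
    have := Nat.div_add_mod n (2 * t + 1)
    have := Nat.mod_lt n hq0
    refine ⟨?_, by omega, by omega⟩
    nlinarith
  · rintro ⟨a, b⟩ hab
    simp only [coe_filter, mem_range, Set.mem_ofPred_eq, coe_product, coe_range, coe_Icc,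
      Set.mem_prod, Set.mem_Iio, Set.mem_Icc] at hab ⊢
    rw [Nat.mul_add_mod, Nat.mod_eq_of_lt (by omega)]
    refine ⟨by nlinarith, ⟨by omega, by nlinarith⟩, by omega, by omega⟩
  · intro n _
    exact Nat.div_add_mod n (2 * t + 1)
  · rintro ⟨a, b⟩ hab
    simp only [coe_product, coe_range, coe_Icc, Set.mem_prod, Set.mem_Iio, Set.mem_Icc] at hab
    dsimp only
    rw [Nat.mul_add_div hq0, Nat.mul_add_mod, Nat.div_eq_of_lt (by omega),
      Nat.mod_eq_of_lt (by omega), add_zero]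

theorem card_not_isLowerHalf_mod {p q : ℕ} (hp : Odd p) (hq : Odd q) :
    #{n ∈ range (p * q + 1) | IsLowerHalf (p * q + 1) n ∧ ¬IsLowerHalf q (n % q)} =
      (p - 1) / 2 * ((q + 1) / 2) := by
  have hsplit := card_filter_add_card_filter_not
    (s := (range (p * q + 1)).filter (IsLowerHalf (p * q + 1)))
    (p := fun n => IsLowerHalf q (n % q))
  simp only [filter_filter, card_filter_range_isLowerHalf, card_isLowerHalf_mod hp hq] at hsplit
  obtain ⟨s, rfl⟩ := hp
  obtain ⟨t, rfl⟩ := hq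
  have hhalf : ((2 * s + 1) * (2 * t + 1) + 1 - 1) / 2 = (s + 1) * t + s * (t + 1) := by
    rw [Nat.add_sub_cancel,
      show (2 * s + 1) * (2 * t + 1) = 2 * ((s + 1) * t + s * (t + 1)) + 1 by ring]
    omega
  rw [hhalf, show (2 * s + 1 + 1) / 2 = s + 1 by omega, show (2 * t + 1 - 1) / 2 = t by omega]
    at hsplit
  rw [show (2 * s + 1 - 1) / 2 = s by omega, show (2 * t + 1 + 1) / 2 = t + 1 by omega]
  omega

theorem card_filter_zmod_neg_val (N : ℕ) [NeZero N] (Q : ℕ → Prop) [DecidablePred Q] :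
    #{i : ZMod N | Q (-i).val} = #{n ∈ range N | Q n} := by
  apply card_nbij' (fun i : ZMod N => (-i).val) (fun n : ℕ => -(n : ZMod N))
  · intro i hi
    simp only [coe_filter, Set.mem_ofPred_eq, mem_univ, true_and, mem_range] at hi ⊢
    exact ⟨ZMod.val_lt _, hi⟩
  · intro n hn
    simp only [coe_filter, Set.mem_ofPred_eq, mem_univ, true_and, mem_range] at hn ⊢
    rw [neg_neg, ZMod.val_cast_of_lt hn.1]
    exact hn.2
  · intro i _
    simp only [ZMod.natCast_zmod_val, neg_neg]
  · intro n hn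
    simp only [coe_filter, Set.mem_ofPred_eq, mem_range] at hn
    simp only [neg_neg, ZMod.val_cast_of_lt hn.1]

theorem ZMod.ne_zero_and_add_self_ne_zero {N : ℕ} {i : ZMod N} (h : IsLowerHalf N (-i).val) :
    i ≠ 0 ∧ i + i ≠ 0 := by
  have hval : (-i + -i).val = 2 * (-i).val := by
    rw [ZMod.val_add_of_lt (by omega), two_mul]
  refine ⟨fun hi => ?_, fun hi => ?_⟩
  · rw [hi, neg_zero, ZMod.val_zero] at h
    exact h.1.false
  · rw [← neg_add, hi, neg_zero, ZMod.val_zero] at hval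
    omega

theorem card_filter_pattern (N p : ℕ) [NeZero N] (C : ℕ → Prop) [DecidablePred C] :
    #{i : ZMod N | (i ≠ 0 ∧ i + i ≠ 0) ∧ IsLowerHalf N (-i).val ∧ C (-((p : ZMod N) * i)).val} =
      #{n ∈ range N | IsLowerHalf N n ∧ C (p * n % N)} := by
  rw [← card_filter_zmod_neg_val]
  congr 1
  apply filter_congr
  intro i _
  rw [← mul_neg, ZMod.val_mul, ZMod.val_natCast, Nat.mod_mul_mod]
  exact ⟨fun h => h.2, fun h => ⟨ZMod.ne_zero_and_add_self_ne_zero h.1, h⟩⟩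

theorem count_patterns_first_two_letters_general (p f : ℕ) (hodd : Odd p)
    (hf : 2 ≤ f) :
    (Finset.univ.filter (fun i : ZMod (p ^ f + 1) =>
        (i ≠ 0 ∧ i + i ≠ 0) ∧
        (0 < (-i).val ∧ 2 * (-i).val < p ^ f + 1) ∧
        (p ^ f + 1 : ℕ) < 2 * (-((p : ZMod (p ^ f + 1)) * i)).val)).card
      = ((p - 1) / 2) * ((p ^ (f - 1) + 1) / 2) ∧
    (Finset.univ.filter (fun i : ZMod (p ^ f + 1) =>
        (i ≠ 0 ∧ i + i ≠ 0) ∧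
        (0 < (-i).val ∧ 2 * (-i).val < p ^ f + 1) ∧
        (0 < (-((p : ZMod (p ^ f + 1)) * i)).val ∧
          2 * (-((p : ZMod (p ^ f + 1)) * i)).val < p ^ f + 1))).card
      = ((p + 1) / 2) * ((p ^ (f - 1) - 1) / 2) := by
  have hq : Odd (p ^ (f - 1)) := hodd.pow
  have hpq : p ^ f = p * p ^ (f - 1) := by rw [← pow_succ', Nat.sub_add_cancel (by omega)]
  refine ⟨(card_filter_pattern _ p (fun v => p ^ f + 1 < 2 * v)).trans ?_,
    (card_filter_pattern _ p (IsLowerHalf (p ^ f + 1))).trans ?_⟩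
  · rw [hpq, ← card_not_isLowerHalf_mod hodd hq]
    exact congrArg card (filter_congr fun n _ => and_congr_right (lt_two_mul_mul_mod_iff hodd hq))
  · rw [hpq, ← card_isLowerHalf_mod hodd hq]
    exact congrArg card (filter_congr fun n _ => and_congr_right (isLowerHalf_mul_mod_iff hodd hq))

/-- let `p` be an odd prime, `f ≥ 2`, `d = p^f + 1`, `S = ℤ/dℤ ∖ {0, d/2}`.
The number of `i ∈ S` whose pattern begins with the letters `lu` (i.e. `−i ∈ A` and
`−p·i ∈ B`) is `((p−1)/2)·((p^(f−1)+1)/2)`, and the number of `i ∈ S` whose pattern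
begins with `ll` (i.e. `−i ∈ A` and `−p·i ∈ A`) is `((p+1)/2)·((p^(f−1)−1)/2)`. -/
theorem count_patterns_first_two_letters (p f : ℕ) (hp : p.Prime) (hodd : Odd p)
    (hf : 2 ≤ f) :
    (Finset.univ.filter (fun i : ZMod (p ^ f + 1) =>
        (i ≠ 0 ∧ i + i ≠ 0) ∧
        (0 < (-i).val ∧ 2 * (-i).val < p ^ f + 1) ∧
        (p ^ f + 1 : ℕ) < 2 * (-((p : ZMod (p ^ f + 1)) * i)).val)).card
      = ((p - 1) / 2) * ((p ^ (f - 1) + 1) / 2) ∧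
    (Finset.univ.filter (fun i : ZMod (p ^ f + 1) =>
        (i ≠ 0 ∧ i + i ≠ 0) ∧
        (0 < (-i).val ∧ 2 * (-i).val < p ^ f + 1) ∧
        (0 < (-((p : ZMod (p ^ f + 1)) * i)).val ∧
          2 * (-((p : ZMod (p ^ f + 1)) * i)).val < p ^ f + 1))).card
      = ((p + 1) / 2) * ((p ^ (f - 1) - 1) / 2) :=
  count_patterns_first_two_letters_general p f hodd hf
end

section
/- The number of elements i ∈ S such that −i ∈ B and −p^{2f−1}·i ∈ A (equivalently, the i ∈ S whose associated word begins with the letter u and ends with the letter l) equals ((p−1)/2)·((p^{f−1}+1)/2). -/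
/-!
Since `p ^ f ≡ -1 (mod d)`, `p ^ (2f-1)` inverts `p`, and the substitution `k = -(p ^ (2f-1) i)`
turns the count into the number of `0 < k < d/2` with `d/2 < p k mod d`. With `n = p ^ (f-1)`,
so that `d = p n + 1`, write `k = q n + r + 1` with `r < n`: then `p k ≡ p (r + 1) - q`, and the
two conditions say exactly `q < (p-1)/2` and `(n-1)/2 ≤ r`.
-/

theorem pow_two_mul_sub_one_mul_eq_one {a f : ℕ} (hf : 1 ≤ f) :
    (a : ZMod (a ^ f + 1)) ^ (2 * f - 1) * a = 1 := by
  have ha : (a : ZMod (a ^ f + 1)) ^ f = -1 := by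
    rw [eq_neg_iff_add_eq_zero]; exact_mod_cast ZMod.natCast_self (a ^ f + 1)
  rw [← pow_succ, show 2 * f - 1 + 1 = f + f by omega, pow_add, ha, neg_one_mul, neg_neg]

theorem ZMod.ne_zero_and_add_self_ne_zero_s10 {d : ℕ} [NeZero d] {y : ZMod d} (h : d < 2 * y.val) :
    y ≠ 0 ∧ y + y ≠ 0 := by
  refine ⟨fun hy => by simp [hy] at h, fun hy => ?_⟩
  have hval := congrArg ZMod.val hy
  rw [ZMod.val_add, ZMod.val_zero] at hval
  have := y.val_lt
  rw [Nat.mod_eq_sub_mod (by omega), Nat.mod_eq_of_lt (by omega)] at hval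
  omega

open Finset in
theorem card_filter_zmod_eq_card_filter_range {d m : ℕ} [NeZero d] {b : ZMod d} (hb : b * m = 1) :
    #(univ.filter (fun i : ZMod d => (i ≠ 0 ∧ i + i ≠ 0) ∧ d < 2 * (-i).val ∧
        (0 < (-(b * i)).val ∧ 2 * (-(b * i)).val < d)))
      = #((range d).filter (fun k => 0 < k ∧ 2 * k < d ∧ d < 2 * (m * k % d))) := by
  have hneg_mul : ∀ k : ℕ, (-(b * -((m * k : ℕ) : ZMod d))) = k := fun k => by
    push_cast; linear_combination (k : ZMod d) * hb
  refine card_nbij' (fun i => (-(b * i)).val) (fun k => -((m * k : ℕ) : ZMod d)) ?_ ?_ ?_ ?_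
  · intro i hi
    simp only [coe_filter, mem_univ, true_and, Set.mem_ofPred_eq, mem_range] at hi ⊢
    have hi' : ((m * (-(b * i)).val : ℕ) : ZMod d) = -i := by
      push_cast; rw [ZMod.natCast_zmod_val]; linear_combination (-i) * hb
    refine ⟨ZMod.val_lt _, hi.2.2.1, hi.2.2.2, ?_⟩
    rw [← ZMod.val_natCast, hi']; exact hi.2.1
  · intro k hk
    simp only [coe_filter, mem_univ, true_and, Set.mem_ofPred_eq, mem_range] at hk ⊢
    rw [hneg_mul, neg_neg, ZMod.val_natCast, ZMod.val_natCast_of_lt hk.1]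
    obtain ⟨hne, hadd⟩ := ZMod.ne_zero_and_add_self_ne_zero_s10 (y := ((m * k : ℕ) : ZMod d))
      (by rw [ZMod.val_natCast]; exact hk.2.2.2)
    refine ⟨⟨?_, ?_⟩, hk.2.2.2, hk.2.1, hk.2.2.1⟩
    · exact neg_ne_zero.mpr hne
    · rw [← neg_add]; exact neg_ne_zero.mpr hadd
  · intro i _
    dsimp only
    push_cast
    rw [ZMod.natCast_zmod_val]; linear_combination i * hb
  · intro k hk
    simp only [coe_filter, Set.mem_ofPred_eq, mem_range] at hk
    dsimp only
    rw [hneg_mul, ZMod.val_natCast_of_lt hk.1]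

theorem mul_add_mod_mul_add_one {p n q r : ℕ} (hq : q ≤ p) (hr : r < n) :
    p * (q * n + r + 1) % (p * n + 1) = p * (r + 1) - q := by
  have hqp : q ≤ p * (r + 1) := hq.trans (Nat.le_mul_of_pos_right p r.succ_pos)
  have hlt : p * (r + 1) ≤ p * n := Nat.mul_le_mul_left p hr
  have h : p * (q * n + r + 1) = (p * (r + 1) - q) + (p * n + 1) * q := by
    zify [hqp]; ring
  rw [h, Nat.add_mul_mod_self_left, Nat.mod_eq_of_lt (by omega)]

theorem lt_and_lt_mul_mod_iff {p n q r : ℕ} (hp : Odd p) (hn : Odd n) (hr : r < n) :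
    (2 * (q * n + r + 1) < p * n + 1 ∧ p * n + 1 < 2 * (p * (q * n + r + 1) % (p * n + 1)))
      ↔ q < p / 2 ∧ n / 2 ≤ r := by
  obtain ⟨s, rfl⟩ := hp
  obtain ⟨u, rfl⟩ := hn
  have hs : (2 * s + 1) / 2 = s := by omega
  have hu : (2 * u + 1) / 2 = u := by omega
  rw [hs, hu]
  constructor
  · rintro ⟨hk, hB⟩
    have hqs : q ≤ s := by nlinarith
    rw [mul_add_mod_mul_add_one (by omega) hr] at hB
    have hur : u ≤ r := by
      by_contra h
      have : (2 * s + 1) * (r + 1) ≤ (2 * s + 1) * u := Nat.mul_le_mul_left _ (by omega)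
      have : (2 * s + 1) * (2 * u + 1) = 2 * ((2 * s + 1) * u) + 2 * s + 1 := by ring
      omega
    refine ⟨?_, hur⟩
    by_contra h
    obtain rfl : q = s := by omega
    nlinarith
  · rintro ⟨hq, hur⟩
    rw [mul_add_mod_mul_add_one (by omega) hr]
    refine ⟨by nlinarith, ?_⟩
    have : (2 * s + 1) * (u + 1) ≤ (2 * s + 1) * (r + 1) := Nat.mul_le_mul_left _ (by omega)
    have : (2 * s + 1) * (2 * u + 1) + 2 * s + 1 = 2 * ((2 * s + 1) * (u + 1)) := by ring
    omega

open Finset in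
theorem card_filter_lt_mul_mod {p n : ℕ} (hp : Odd p) (hn : Odd n) :
    #((range (p * n + 1)).filter
        (fun k => 0 < k ∧ 2 * k < p * n + 1 ∧ p * n + 1 < 2 * (p * k % (p * n + 1))))
      = (p - 1) / 2 * ((n + 1) / 2) := by
  have hn0 : 0 < n := hn.pos
  have hdecomp : ∀ q r, r < n → (q * n + r) / n = q ∧ (q * n + r) % n = r := fun q r hr =>
    (Nat.div_mod_unique hn0).2 ⟨by ring, hr⟩
  have himage : (range (p * n + 1)).filter
        (fun k => 0 < k ∧ 2 * k < p * n + 1 ∧ p * n + 1 < 2 * (p * k % (p * n + 1)))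
      = (range (p / 2) ×ˢ Ico (n / 2) n).image (fun x => x.1 * n + x.2 + 1) := by
    ext k
    simp only [mem_filter, mem_range, mem_image, mem_product, mem_Ico, Prod.exists]
    constructor
    · rintro ⟨-, hk0, hk⟩
      have hr : (k - 1) % n < n := Nat.mod_lt _ hn0
      have hk' : k = (k - 1) / n * n + (k - 1) % n + 1 := by
        have := Nat.div_add_mod' (k - 1) n; omega
      rw [hk', lt_and_lt_mul_mod_iff hp hn hr] at hk
      exact ⟨_, _, ⟨hk.1, hk.2, hr⟩, hk'.symm⟩
    · rintro ⟨q, r, ⟨hq, hur, hr⟩, rfl⟩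
      have hk := (lt_and_lt_mul_mod_iff hp hn hr).2 ⟨hq, hur⟩
      exact ⟨by omega, by omega, hk⟩
  have hinj : Set.InjOn (fun x : ℕ × ℕ => x.1 * n + x.2 + 1) ↑(range (p / 2) ×ˢ Ico (n / 2) n) := by
    rintro ⟨q, r⟩ hqr ⟨q', r'⟩ hqr' h
    simp only [coe_product, coe_range, coe_Ico, Set.mem_prod, Set.mem_Iio, Set.mem_Ico] at hqr hqr'
    have h' : q * n + r = q' * n + r' := by simpa using h
    obtain ⟨hq, hr⟩ := hdecomp q r hqr.2.2
    obtain ⟨hq', hr'⟩ := hdecomp q' r' hqr'.2.2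
    rw [h'] at hq hr
    rw [← hq, ← hr, hq', hr']
  rw [himage, card_image_of_injOn hinj, card_product, card_range, Nat.card_Ico]
  obtain ⟨s, rfl⟩ := hp
  obtain ⟨u, rfl⟩ := hn
  congr 1 <;> omega

theorem count_words_u_start_l_end_general (p f : ℕ) (hodd : Odd p) (hf : 1 ≤ f) :
    (Finset.univ.filter (fun i : ZMod (p ^ f + 1) =>
        (i ≠ 0 ∧ i + i ≠ 0) ∧
        (p ^ f + 1 : ℕ) < 2 * (-i).val ∧
        (0 < (-((p : ZMod (p ^ f + 1)) ^ (2 * f - 1) * i)).val ∧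
          2 * (-((p : ZMod (p ^ f + 1)) ^ (2 * f - 1) * i)).val < p ^ f + 1))).card
      = ((p - 1) / 2) * ((p ^ (f - 1) + 1) / 2) := by
  rw [card_filter_zmod_eq_card_filter_range (pow_two_mul_sub_one_mul_eq_one hf),
    ← mul_pow_sub_one (by omega : f ≠ 0), card_filter_lt_mul_mod hodd hodd.pow]

/-- let `p` be an odd prime, `f ≥ 1`, `d = p^f + 1`, `S = ℤ/dℤ ∖ {0, d/2}`.
The number of `i ∈ S` with `−i ∈ B` and `−p^(2f−1)·i ∈ A` (i.e. those whose word begins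
with `u` and ends with `l`) equals `((p−1)/2)·((p^(f−1)+1)/2)`. -/
theorem count_words_u_start_l_end (p f : ℕ) (hp : p.Prime) (hodd : Odd p) (hf : 1 ≤ f) :
    (Finset.univ.filter (fun i : ZMod (p ^ f + 1) =>
        (i ≠ 0 ∧ i + i ≠ 0) ∧
        (p ^ f + 1 : ℕ) < 2 * (-i).val ∧
        (0 < (-((p : ZMod (p ^ f + 1)) ^ (2 * f - 1) * i)).val ∧
          2 * (-((p : ZMod (p ^ f + 1)) ^ (2 * f - 1) * i)).val < p ^ f + 1))).card
      = ((p - 1) / 2) * ((p ^ (f - 1) + 1) / 2) :=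
  count_words_u_start_l_end_general p f hodd hf
end

section
/- Suppose d > 2, p does not divide d, and d divides p^f+1 for some f ≥ 1. Let i ∈ ℤ/dℤ with i ≠ 0 and 2i ≠ 0, and let m be the size of the orbit of i under multiplication by p. Then m is even, p^{m/2}·i = −i, and for every j with 1 ≤ j ≤ m/2 one has −p^{j−1}·i ∈ A if and only if −p^{m/2+j−1}·i ∈ B. In other words, the second half of the word of the orbit of i is the letter-by-letter complement of the first half (the orbit is complementary). -/
open scoped Classical

/-- The size of the orbit of `i ∈ ℤ/dℤ` under multiplication by `p`. -/
noncomputable def orbSize (p d : ℕ) [NeZero d] (i : ZMod d) : ℕ :=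
  (Finset.image (fun j : ℕ => (p : ZMod d) ^ j * i) (Finset.range d)).card

/-!
Multiplication by `p` sends `i` to `-i` after `f` steps and `-i` back to `i`, and `-i ≠ i`.
For any map `g` that swaps two distinct points `x ≠ y` after `f` steps, the minimal period `m`
of `x` divides `2f` but not `f`, which forces `2 (f mod m) = m`; so `m` is even and
`g^[m/2] x = g^[f] x = y`. Since `ℤ/dℤ` is finite, the orbit size is this minimal period.
The word is complementary because `a ↦ -a` exchanges `A` and `B` on every `a` with `a ≠ -a`.
-/

theorem Nat.two_mul_mod_eq_of_dvd_two_mul {m f : ℕ} (h2f : m ∣ 2 * f) (hf : ¬ m ∣ f) :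
    2 * (f % m) = m := by
  have hm : 0 < m := Nat.pos_of_ne_zero (by rintro rfl; simp_all)
  have hr : f % m ≠ 0 := fun h => hf (Nat.dvd_of_mod_eq_zero h)
  obtain ⟨c, hc⟩ : m ∣ 2 * (f % m) := by
    rwa [← Nat.dvd_add_right (dvd_mul_of_dvd_right (Nat.dvd_mul_right m (f / m)) 2),
      ← mul_add, Nat.div_add_mod]
  have hc2 : c < 2 := Nat.lt_of_mul_lt_mul_left (a := m) (by have := Nat.mod_lt f hm; omega)
  interval_cases c <;> omega

namespace Function

variable {α : Type*} {g : α → α} {x y : α}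

theorem card_image_iterate_range [DecidableEq α] (hx : x ∈ periodicPts g) {N : ℕ}
    (hN : minimalPeriod g x ≤ N) :
    ((Finset.range N).image fun j => g^[j] x).card = minimalPeriod g x := by
  have himage : ((Finset.range N).image fun j => g^[j] x) =
      (Finset.range (minimalPeriod g x)).image fun j => g^[j] x := by
    refine Finset.Subset.antisymm ?_ (Finset.image_subset_image (Finset.range_subset_range.2 hN))
    intro z hz
    obtain ⟨j, -, rfl⟩ := Finset.mem_image.1 hz
    exact Finset.mem_image.2 ⟨j % minimalPeriod g x,
      Finset.mem_range.2 (Nat.mod_lt _ (minimalPeriod_pos_of_mem_periodicPts hx)),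
      iterate_mod_minimalPeriod_eq⟩
  rw [himage, Finset.card_image_of_injOn (by simpa using iterate_injOn_Iio_minimalPeriod),
    Finset.card_range]

theorem even_minimalPeriod_and_iterate_half_eq_of_swap {f : ℕ} (hxy : g^[f] x = y)
    (hyx : g^[f] y = x) (hne : y ≠ x) :
    Even (minimalPeriod g x) ∧ g^[minimalPeriod g x / 2] x = y := by
  have hf : f ≠ 0 := by rintro rfl; exact hne hxy.symm
  have hper : IsPeriodicPt g (2 * f) x := by
    rw [IsPeriodicPt, IsFixedPt, two_mul, iterate_add_apply, hxy, hyx]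
  have hnot : ¬ minimalPeriod g x ∣ f := fun h =>
    hne (hxy ▸ (isPeriodicPt_minimalPeriod g x).trans_dvd h)
  have hmod := Nat.two_mul_mod_eq_of_dvd_two_mul (hper.minimalPeriod_dvd) hnot
  refine ⟨⟨f % minimalPeriod g x, by omega⟩, ?_⟩
  rw [← hmod, Nat.mul_div_cancel_left _ two_pos, iterate_mod_minimalPeriod_eq, hxy]

end Function

namespace ZMod

variable {d : ℕ} [NeZero d]

theorem two_mul_val_lt_iff_lt_two_mul_val_neg {x : ZMod d} (hx : x + x ≠ 0) :
    (0 < x.val ∧ 2 * x.val < d) ↔ d < 2 * (-x).val := by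
  have hx0 : x ≠ 0 := by rintro rfl; simp at hx
  have hval : x.val ≠ 0 := (val_ne_zero x).2 hx0
  have hhalf : 2 * x.val ≠ d := by
    intro h
    apply hx
    rw [← natCast_zmod_val x, ← Nat.cast_add, ← two_mul, h, natCast_self]
  rw [neg_val, if_neg hx0]
  have := val_lt x
  omega

end ZMod

theorem orbit_complementary_general (p d f : ℕ) [NeZero d] (hdvd : d ∣ p ^ f + 1)
    (i : ZMod d) (h2i : i + i ≠ 0) :
    Even (orbSize p d i) ∧
    (p : ZMod d) ^ (orbSize p d i / 2) * i = -i ∧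
    (∀ j, 1 ≤ j → j ≤ orbSize p d i / 2 →
      ((0 < (-((p : ZMod d) ^ (j - 1) * i)).val ∧
          2 * (-((p : ZMod d) ^ (j - 1) * i)).val < d) ↔
        (d : ℕ) < 2 * (-((p : ZMod d) ^ (orbSize p d i / 2 + j - 1) * i)).val)) := by
  set q : ZMod d := (p : ZMod d)
  have hqf : q ^ f = -1 := by
    have := (ZMod.natCast_eq_zero_iff _ d).2 hdvd
    push_cast at this
    exact eq_neg_of_add_eq_zero_left this
  have hne : -i ≠ i := fun h => h2i (by rw [← neg_add_cancel i, h])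
  have hq : IsUnit q := by
    rcases Nat.eq_zero_or_pos f with rfl | hf
    · exact absurd (by rw [← neg_one_mul, ← hqf, pow_zero, one_mul]) hne
    · exact (isUnit_pow_iff hf.ne').1 (hqf ▸ isUnit_one.neg)
  have hsize : orbSize p d i = Function.minimalPeriod (q * ·) i := by
    simpa [orbSize, mul_left_iterate] using
      Function.card_image_iterate_range (hq.mul_right_injective.mem_periodicPts i)
        (Function.minimalPeriod_le_card.trans_eq (ZMod.card d))
  obtain ⟨heven, hhalf⟩ := Function.even_minimalPeriod_and_iterate_half_eq_of_swap
    (g := (q * ·)) (f := f) (by simp [mul_left_iterate, hqf]) (by simp [mul_left_iterate, hqf]) hne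
  rw [mul_left_iterate_apply, ← hsize] at hhalf
  refine ⟨hsize ▸ heven, hhalf, fun j hj _ => ?_⟩
  have hsecond : q ^ (orbSize p d i / 2 + j - 1) * i = -(q ^ (j - 1) * i) := by
    rw [show orbSize p d i / 2 + j - 1 = (j - 1) + orbSize p d i / 2 by omega, pow_add,
      mul_assoc, hhalf, mul_neg]
  rw [hsecond]
  refine ZMod.two_mul_val_lt_iff_lt_two_mul_val_neg ?_
  rw [← neg_add, neg_ne_zero, ← mul_add]
  exact (hq.pow _).mul_right_eq_zero.not.2 h2i

/-- suppose `p` is an odd prime, `d > 2`, `p ∤ d` and `d ∣ p^f + 1`.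
Let `i ∈ ℤ/dℤ` with `i ≠ 0` and `2i ≠ 0`, and let `m` be the size of the orbit of `i`
under multiplication by `p`.  Then `m` is even, `p^(m/2)·i = −i`, and for `1 ≤ j ≤ m/2`
one has `−p^(j−1)·i ∈ A` iff `−p^(m/2+j−1)·i ∈ B`; i.e. the second half of the word of
the orbit of `i` is the letter-by-letter complement of the first half. -/
theorem orbit_complementary (p d f : ℕ) [NeZero d] (hp : p.Prime) (hodd : Odd p)
    (hd : 2 < d) (hpd : ¬ p ∣ d) (hf : 1 ≤ f) (hdvd : d ∣ p ^ f + 1)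
    (i : ZMod d) (hi : i ≠ 0) (h2i : i + i ≠ 0) :
    Even (orbSize p d i) ∧
    (p : ZMod d) ^ (orbSize p d i / 2) * i = -i ∧
    (∀ j, 1 ≤ j → j ≤ orbSize p d i / 2 →
      ((0 < (-((p : ZMod d) ^ (j - 1) * i)).val ∧
          2 * (-((p : ZMod d) ^ (j - 1) * i)).val < d) ↔
        (d : ℕ) < 2 * (-((p : ZMod d) ^ (orbSize p d i / 2 + j - 1) * i)).val)) :=
  orbit_complementary_general p d f hdvd i h2i
end

section
/- Let w = w_1⋯w_{2n} be a word of even length 2n in the alphabet {u,l} such that the second half is the letter-by-letter complement of the first half (for each 1 ≤ j ≤ n, exactly one of w_j, w_{n+j} is u) and such that the associated sequence satisfies a_j ≥ 0 for all 0 ≤ j ≤ 2n. Then ∑_{j=1}^{2n} a_j = n · max_{0≤j≤2n} a_j. -/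
/-!
Complementarity makes the steps `j` and `n + j` cancel, so `a_j + a_(n+j) = a_n` for `j ≤ n`.
Since every `a_i` is nonnegative, this forces `a_j ≤ a_n` on both halves, so `a_n` is the
maximum, and pairing the term `j` with the term `n + j` turns the sum into `n · a_n`.
-/

/-- The sequence attached to a word `w` in the alphabet `{u, l}` (1-based; `true = u`):
`a_0 = 0` and `a_j = a_(j−1) + 1` if `w_j = u`, `a_j = a_(j−1) − 1` if `w_j = l`. -/
def aWord (w : ℕ → Bool) : ℕ → ℤ
  | 0 => 0
  | j + 1 => aWord w j + (if w (j + 1) then 1 else -1)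

theorem Finset.sum_Icc_one_two_mul {M : Type*} [AddCommMonoid M] (f : ℕ → M) (n : ℕ) :
    ∑ j ∈ Icc 1 (2 * n), f j = ∑ j ∈ Icc 1 n, (f j + f (n + j)) := by
  have hIcc : ∀ m, Icc 1 m = Ioc 0 m := fun m => by ext; simp [Nat.lt_iff_add_one_le]
  have hsecond : Ioc n (2 * n) = (Ioc 0 n).map (addLeftEmbedding n) := by
    rw [map_add_left_Ioc, add_zero, two_mul]
  rw [hIcc, hIcc, ← sum_Ioc_consecutive _ (Nat.zero_le n) (by omega : n ≤ 2 * n), hsecond,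
    sum_map, sum_add_distrib]
  rfl

theorem aWord_add_aWord_add_of_complement {n : ℕ} {w : ℕ → Bool}
    (hcomp : ∀ j, 1 ≤ j → j ≤ n → w j ≠ w (n + j)) {j : ℕ} (hj : j ≤ n) :
    aWord w j + aWord w (n + j) = aWord w n := by
  induction j with
  | zero => simp [aWord]
  | succ k ih =>
    have hsteps :
        (if w (k + 1) then 1 else -1) + (if w (n + (k + 1)) then 1 else -1) = (0 : ℤ) := by
      have hne := hcomp (k + 1) (by omega) hj
      revert hne
      cases w (k + 1) <;> cases w (n + (k + 1)) <;> simp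
    rw [← ih (by omega), ← add_assoc n k 1]
    simp only [aWord]
    linear_combination hsteps

theorem aWord_le_aWord_of_complement {n : ℕ} {w : ℕ → Bool}
    (hcomp : ∀ j, 1 ≤ j → j ≤ n → w j ≠ w (n + j))
    (hpos : ∀ j, j ≤ 2 * n → 0 ≤ aWord w j) {j : ℕ} (hj : j ≤ 2 * n) :
    aWord w j ≤ aWord w n := by
  rcases le_or_gt j n with hjn | hnj
  · have := aWord_add_aWord_add_of_complement hcomp hjn
    linarith [hpos (n + j) (by omega)]
  · obtain ⟨i, rfl⟩ := Nat.exists_eq_add_of_le hnj.le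
    have := aWord_add_aWord_add_of_complement hcomp (j := i) (by omega)
    linarith [hpos i (by omega)]

/-- let `w = w_1 ⋯ w_(2n)` be a word of even length `2n` whose second half
is the letter-by-letter complement of the first half, and whose associated sequence
satisfies `a_j ≥ 0` for all `0 ≤ j ≤ 2n`.  Then `∑_{j=1}^{2n} a_j = n · max_j a_j`. -/
theorem complementary_word_height_sum (n : ℕ) (w : ℕ → Bool)
    (hcomp : ∀ j, 1 ≤ j → j ≤ n → w j ≠ w (n + j))
    (hpos : ∀ j, j ≤ 2 * n → 0 ≤ aWord w j) :
    ∑ j ∈ Finset.Icc 1 (2 * n), aWord w j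
      = (n : ℤ) * (Finset.range (2 * n + 1)).sup' Finset.nonempty_range_add_one (aWord w) := by
  have hmax : (Finset.range (2 * n + 1)).sup' Finset.nonempty_range_add_one (aWord w)
      = aWord w n := by
    refine le_antisymm (Finset.sup'_le _ _ fun j hj => ?_) (Finset.le_sup' _ (by simp; omega))
    exact aWord_le_aWord_of_complement hcomp hpos (by simpa [Nat.lt_succ_iff] using hj)
  have hpairs : ∀ j ∈ Finset.Icc 1 n, aWord w j + aWord w (n + j) = aWord w n :=
    fun j hj => aWord_add_aWord_add_of_complement hcomp (Finset.mem_Icc.mp hj).2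
  rw [hmax, Finset.sum_Icc_one_two_mul, Finset.sum_congr rfl hpairs, Finset.sum_const,
    Nat.card_Icc, add_tsub_cancel_right, nsmul_eq_mul]
end

section
/- In the polynomial ring 𝔽_p[u], for every odd prime p and every f ≥ 1, the polynomial (1+u)^{(p^f+p)/2} − (1+u)^{(p^f+1)/2} − u^p·(1+u)^{p(p^f−1)/2} + u·(1+u)^{(p^f−1)/2} is congruent to (1+u)^{(p^f−p)/2}·(1 − (1+u)^{(p−1)/2}) modulo u^{p^f+1}; that is, u^{p^f+1} divides their difference in 𝔽_p[u]. -/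
open Polynomial

/-! Write `p = 2b + 1` and `p ^ f = q = 2(c + b) + 1`. By Frobenius, `(1 + u) ^ p = 1 + u ^ p` and,
since `p(q - 1)/2 = c + bq`, `(1 + u) ^ (p(q - 1)/2) = (1 + u) ^ c (1 + u ^ q) ^ b`. After these
substitutions the difference is exactly `u ^ p (1 + u) ^ c (1 - (1 + u ^ q) ^ b)`, and
`u ^ q ∣ 1 - (1 + u ^ q) ^ b`. -/

section
variable {R : Type*} [CommRing R]

theorem legendre_broumas_difference_eq (x s w : R) (b c : ℕ) (h : (1 + x) ^ (2 * b + 1) = 1 + s) :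
    (1 + x) ^ (c + 2 * b + 1) - (1 + x) ^ (c + b + 1) - s * ((1 + x) ^ c * w)
        + x * (1 + x) ^ (c + b) - (1 + x) ^ c * (1 - (1 + x) ^ b)
      = s * (1 + x) ^ c * (1 - w) := by
  rw [show c + 2 * b + 1 = c + (2 * b + 1) by ring, pow_add, h]
  ring

theorem X_pow_dvd_legendre_broumas (p f : ℕ) [ExpChar R p] (hp : Odd p) (hf : 1 ≤ f) :
    (X : R[X]) ^ (p ^ f + 1) ∣
      ((1 + X) ^ ((p ^ f + p) / 2) - (1 + X) ^ ((p ^ f + 1) / 2)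
          - X ^ p * (1 + X) ^ ((p * (p ^ f - 1)) / 2) + X * (1 + X) ^ ((p ^ f - 1) / 2))
        - (1 + X) ^ ((p ^ f - p) / 2) * (1 - (1 + X) ^ ((p - 1) / 2)) := by
  obtain ⟨b, hb⟩ := hp
  set q := p ^ f with hq
  obtain ⟨c, hc⟩ : ∃ c, q = 2 * (c + b) + 1 := by
    obtain ⟨a, ha⟩ : Odd q := Odd.pow ⟨b, hb⟩
    have : p ≤ q := Nat.le_self_pow (by omega) p
    exact ⟨a - b, by omega⟩
  have hexp : p * (q - 1) / 2 = c + q * b := by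
    rw [hc, Nat.add_sub_cancel, Nat.mul_div_assoc _ (dvd_mul_right 2 _),
      Nat.mul_div_cancel_left _ two_pos, hb]
    ring
  have hfrob : ((1 : R[X]) + X) ^ (2 * b + 1) = 1 + X ^ p := by
    rw [← hb, add_pow_expChar, one_pow]
  rw [show (q + p) / 2 = c + 2 * b + 1 by omega, show (q + 1) / 2 = c + b + 1 by omega,
    show (q - 1) / 2 = c + b by omega, show (q - p) / 2 = c by omega,
    show (p - 1) / 2 = b by omega, hexp, pow_add _ c, pow_mul, hq, add_pow_expChar_pow, one_pow,
    legendre_broumas_difference_eq _ _ _ b c hfrob, ← hq]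
  have hw : (X : R[X]) ^ q ∣ 1 - (1 + X ^ q) ^ b := by
    simpa using one_sub_dvd_one_sub_pow (1 + (X : R[X]) ^ q) b
  calc (X : R[X]) ^ (q + 1) ∣ X ^ p * X ^ q := by
        rw [← pow_add]; exact pow_dvd_pow _ (by omega)
    _ ∣ X ^ p * (1 + X) ^ c * (1 - (1 + X ^ q) ^ b) := by
        rw [mul_assoc]; exact mul_dvd_mul_left _ (dvd_mul_of_dvd_right hw _)
end

/-- In `𝔽_p[u]`, for an odd prime `p` and `f ≥ 1`, the polynomial
`(1+u)^((p^f+p)/2) − (1+u)^((p^f+1)/2) − u^p·(1+u)^(p(p^f−1)/2) + u·(1+u)^((p^f−1)/2)`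
is congruent to `(1+u)^((p^f−p)/2)·(1 − (1+u)^((p−1)/2))` modulo `u^(p^f+1)`. -/
theorem legendre_broumas_congruence (p f : ℕ) [Fact p.Prime] (hp : Odd p) (hf : 1 ≤ f) :
    (X : (ZMod p)[X]) ^ (p ^ f + 1) ∣
      ((1 + X) ^ ((p ^ f + p) / 2) - (1 + X) ^ ((p ^ f + 1) / 2)
          - X ^ p * (1 + X) ^ ((p * (p ^ f - 1)) / 2) + X * (1 + X) ^ ((p ^ f - 1) / 2))
        - (1 + X) ^ ((p ^ f - p) / 2) * (1 - (1 + X) ^ ((p - 1) / 2)) :=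
  X_pow_dvd_legendre_broumas p f hp hf
end

section
/- For f ≥ 1, let T_f be the set of tuples (k; e_1,…,e_k) where k ≥ 1 is odd, each e_j is a positive integer, e_1 + ⋯ + e_k = f, and, setting e_{k+j} := e_j for 1 ≤ j ≤ k, the alternating sums A_ℓ = e_1 − e_2 + e_3 − ⋯ ± e_ℓ are ≥ 0 for all even ℓ with 2 ≤ ℓ ≤ 2k. For a tuple in T_f define D = max{e_i − e_{i+1} + ⋯ + e_j : 2 ≤ i ≤ j ≤ k−1 with i and j even}, with the convention D = 0 when this index set is empty (in particular when k = 1). Then the maximum of D over all tuples in T_f equals ⌊f/3⌋. -/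
/-- The alternating sum `e_{ij} = e_i − e_{i+1} + e_{i+2} − ⋯ ± e_j`. -/
def altSum (e : ℕ → ℕ) (i j : ℕ) : ℤ :=
  ∑ ℓ ∈ Finset.Icc i j, (-1 : ℤ) ^ (ℓ - i) * (e ℓ : ℤ)

/-- The periodic extension of `e 1, …, e k` by `e (k + j) = e j`, used on indices
`1 ≤ j ≤ 2k`. -/
def extendE (e : ℕ → ℕ) (k : ℕ) (j : ℕ) : ℕ :=
  if j ≤ k then e j else e (j - k)

/-- `D = max{e_i − e_{i+1} + ⋯ + e_j : 2 ≤ i ≤ j ≤ k−1, i and j even}`, with the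
convention `D = 0` when the index set is empty (in particular when `k = 1`).
(The maximum, when the index set is nonempty, is positive, so computing it in `ℕ`
via truncation is harmless.) -/
def maxEvenAlt (e : ℕ → ℕ) (k : ℕ) : ℕ :=
  Finset.sup
    (((Finset.Icc 2 (k - 1)) ×ˢ (Finset.Icc 2 (k - 1))).filter
      fun ij => ij.1 ≤ ij.2 ∧ Even ij.1 ∧ Even ij.2)
    (fun ij => (altSum e ij.1 ij.2).toNat)

/-- The set `T_f`: tuples `(k; e 1, …, e k)` with `k ≥ 1` odd, `e j > 0`,
`e 1 + ⋯ + e k = f`, and all even partial alternating sums `A_ℓ ≥ 0` for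
`2 ≤ ℓ ≤ 2k` of the periodic extension of `e`. -/
def memTf (f k : ℕ) (e : ℕ → ℕ) : Prop :=
  Odd k ∧ 1 ≤ k ∧ (∀ j, 1 ≤ j → j ≤ k → 0 < e j) ∧
    (∑ j ∈ Finset.Icc 1 k, e j = f) ∧
    ∀ ℓ, Even ℓ → 2 ≤ ℓ → ℓ ≤ 2 * k → 0 ≤ altSum (extendE e k) 1 ℓ

/-! The partial sums `A_ℓ = altSum e 1 ℓ` of the periodic extension satisfy
`A_{k+m} = A_k - A_m`, so the conditions defining `T_f` say that `A_ℓ ≥ 0` for even `ℓ ≤ k`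
and `A_m ≤ A_k` for odd `m ≤ k`. For even `2 ≤ i ≤ j < k` this gives
`e_{ij} = A_{i-1} - A_j ≤ A_k`, while `e_{ij} ≤ E`, the sum of the even-indexed entries.
Since `f = A_k + 2E`, we get `3 e_{ij} ≤ f`. The bound is attained by `(3; m, m, f - 2m)` with
`m = ⌊f/3⌋` when `f ≥ 3`, and by `(1; f)` otherwise. -/

open Finset

lemma altSum_congr {e e' : ℕ → ℕ} {i j : ℕ} (h : ∀ ℓ, i ≤ ℓ → ℓ ≤ j → e ℓ = e' ℓ) :
    altSum e i j = altSum e' i j :=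
  sum_congr rfl fun ℓ hℓ => by rw [h ℓ (mem_Icc.1 hℓ).1 (mem_Icc.1 hℓ).2]

lemma altSum_split (e : ℕ → ℕ) {i m j : ℕ} (him : i ≤ m + 1) (hmj : m ≤ j) :
    altSum e i j = altSum e i m + (-1 : ℤ) ^ (m + 1 - i) * altSum e (m + 1) j := by
  simp only [altSum, ← Ico_add_one_right_eq_Icc, mul_sum]
  rw [← sum_Ico_consecutive _ him (by omega : m + 1 ≤ j + 1)]
  congr 1
  refine sum_congr rfl fun ℓ hℓ => ?_
  rw [← mul_assoc, ← pow_add]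
  congr 2
  have := (mem_Ico.1 hℓ).1
  omega

lemma altSum_extendE_of_le (e : ℕ → ℕ) {k ℓ : ℕ} (hℓ : ℓ ≤ k) :
    altSum (extendE e k) 1 ℓ = altSum e 1 ℓ :=
  altSum_congr fun _ _ hn => if_pos (hn.trans hℓ)

lemma altSum_extendE_add (e : ℕ → ℕ) {k : ℕ} (hk : Odd k) (m : ℕ) :
    altSum (extendE e k) 1 (k + m) = altSum e 1 k - altSum e 1 m := by
  have hshift : altSum (extendE e k) (k + 1) (k + m) = altSum e 1 m := by
    unfold altSum
    rw [← map_add_left_Icc 1 m k, sum_map]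
    refine sum_congr rfl fun n hn => ?_
    have hn := (mem_Icc.1 hn).1
    simp only [addLeftEmbedding_apply, extendE, if_neg (show ¬k + n ≤ k by omega)]
    rw [show k + n - (k + 1) = n - 1 by omega, Nat.add_sub_cancel_left]
  rw [altSum_split _ (m := k) (by omega) (by omega), altSum_extendE_of_le e le_rfl, hshift,
    Nat.add_sub_cancel, hk.neg_one_pow]
  ring

lemma altSum_extendE_nonneg_iff (e : ℕ → ℕ) {k : ℕ} (hk : Odd k) :
    (∀ ℓ, Even ℓ → 2 ≤ ℓ → ℓ ≤ 2 * k → 0 ≤ altSum (extendE e k) 1 ℓ) ↔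
      (∀ ℓ, Even ℓ → 2 ≤ ℓ → ℓ ≤ k → 0 ≤ altSum e 1 ℓ) ∧
        ∀ m, Odd m → m ≤ k → altSum e 1 m ≤ altSum e 1 k := by
  constructor
  · intro h
    refine ⟨fun ℓ hℓ h2 hk' => ?_, fun m hm hmk => ?_⟩
    · rw [← altSum_extendE_of_le e hk']
      exact h ℓ hℓ h2 (by omega)
    · have := h (k + m) (hk.add_odd hm) (by have := hm.pos; omega) (by omega)
      rw [altSum_extendE_add e hk] at this
      omega
  · rintro ⟨hle, hgt⟩ ℓ hℓ h2 h2k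
    rcases le_or_gt ℓ k with hk' | hk'
    · rw [altSum_extendE_of_le e hk']
      exact hle ℓ hℓ h2 hk'
    · obtain ⟨m, rfl⟩ := Nat.exists_eq_add_of_le hk'.le
      have hm : Odd m := by grind
      rw [altSum_extendE_add e hk]
      linarith [hgt m hm (by omega)]

lemma altSum_le_sum_even (e : ℕ → ℕ) {i : ℕ} (hi : Even i) (j : ℕ) :
    altSum e i j ≤ ∑ ℓ ∈ (Icc i j).filter Even, (e ℓ : ℤ) := by
  rw [altSum, sum_filter]
  refine sum_le_sum fun ℓ hℓ => ?_
  simp only [neg_one_pow_eq_ite, Nat.even_sub (mem_Icc.1 hℓ).1]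
  by_cases hℓ : Even ℓ <;> simp [hℓ, hi]

lemma altSum_one_add_two_mul_sum_even (e : ℕ → ℕ) (j : ℕ) :
    altSum e 1 j + 2 * ∑ ℓ ∈ (Icc 1 j).filter Even, (e ℓ : ℤ) = ∑ ℓ ∈ Icc 1 j, (e ℓ : ℤ) := by
  rw [altSum, sum_filter, mul_sum, ← sum_add_distrib]
  refine sum_congr rfl fun ℓ hℓ => ?_
  simp only [neg_one_pow_eq_ite, Nat.even_sub (mem_Icc.1 hℓ).1]
  by_cases hℓ : Even ℓ <;> simp [hℓ, two_mul]

lemma three_mul_altSum_le {f k : ℕ} {e : ℕ → ℕ} (h : memTf f k e) {i j : ℕ} (hi : 2 ≤ i)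
    (hjk : j < k) (hij : i ≤ j) (hie : Even i) (hje : Even j) :
    3 * altSum e i j ≤ f := by
  obtain ⟨hk, -, -, hsum, hA⟩ := h
  obtain ⟨hA_even, hA_odd⟩ := (altSum_extendE_nonneg_iff e hk).1 hA
  have hi' : Odd (i - 1) := by grind
  have hsplit : altSum e 1 j = altSum e 1 (i - 1) - altSum e i j := by
    rw [altSum_split e (m := i - 1) (by omega) (by omega), Nat.sub_add_cancel (by omega),
      hi'.neg_one_pow]
    ring
  have hle_total : altSum e i j ≤ altSum e 1 k := by
    linarith [hA_even j hje (by omega) hjk.le, hA_odd (i - 1) hi' (by omega)]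
  have hle_even : altSum e i j ≤ ∑ ℓ ∈ (Icc 1 k).filter Even, (e ℓ : ℤ) :=
    (altSum_le_sum_even e hie j).trans <| sum_le_sum_of_subset_of_nonneg
      (filter_subset_filter _ (Icc_subset_Icc (by omega) hjk.le)) fun _ _ _ => by positivity
  have hf : altSum e 1 k + 2 * ∑ ℓ ∈ (Icc 1 k).filter Even, (e ℓ : ℤ) = f := by
    rw [altSum_one_add_two_mul_sum_even, ← hsum]
    push_cast
    rfl
  linarith

lemma maxEvenAlt_le_div_three {f k : ℕ} {e : ℕ → ℕ} (h : memTf f k e) :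
    maxEvenAlt e k ≤ f / 3 := by
  refine Finset.sup_le fun ij hij => ?_
  simp only [mem_filter, mem_product, mem_Icc] at hij
  have := three_mul_altSum_le h hij.1.1.1 (by omega) hij.2.1 hij.2.2.1 hij.2.2.2
  omega

lemma maxEvenAlt_one (e : ℕ → ℕ) : maxEvenAlt e 1 = 0 := by
  simp [maxEvenAlt]

lemma maxEvenAlt_three (e : ℕ → ℕ) : maxEvenAlt e 3 = e 2 := by
  simp [maxEvenAlt, altSum, filter_singleton]

lemma memTf_one {f : ℕ} (hf : 0 < f) : memTf f 1 (fun _ => f) := by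
  refine ⟨odd_one, le_rfl, fun _ _ _ => hf, by simp, (altSum_extendE_nonneg_iff _ odd_one).2 ?_⟩
  exact ⟨fun ℓ _ h2 h1 => by omega, fun m hm h1 => by rw [show m = 1 by grind]⟩

def threeTuple (a b c : ℕ) : ℕ → ℕ := fun j => if j = 1 then a else if j = 2 then b else c

lemma memTf_threeTuple {a b c : ℕ} (hb : 0 < b) (hba : b ≤ a) (hbc : b ≤ c) :
    memTf (a + b + c) 3 (threeTuple a b c) := by
  refine ⟨by decide, by norm_num, fun j hj1 hj3 => ?_, ?_,
    (altSum_extendE_nonneg_iff _ (by decide)).2 ⟨?_, ?_⟩⟩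
  · simp [threeTuple]
    split_ifs <;> omega
  · simp [threeTuple, Finset.Icc_ofNat_ofNat]
    ring
  · intro ℓ hℓ h2 h3
    obtain rfl : ℓ = 2 := by grind
    simpa [altSum, threeTuple, Finset.Icc_ofNat_ofNat] using hba
  · intro m hm h3
    obtain rfl | rfl : m = 1 ∨ m = 3 := by grind
    · simp [altSum, threeTuple, Finset.Icc_ofNat_ofNat]
      omega
    · rfl

/-- the maximum of `D` over all tuples in `T_f` equals `⌊f/3⌋`. -/
theorem max_sha_exponent_invariant (f : ℕ) (hf : 1 ≤ f) :
    (∀ k e, memTf f k e → maxEvenAlt e k ≤ f / 3) ∧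
    (∃ k e, memTf f k e ∧ maxEvenAlt e k = f / 3) := by
  refine ⟨fun k e h => maxEvenAlt_le_div_three h, ?_⟩
  rcases lt_or_ge f 3 with hf3 | hf3
  · exact ⟨1, fun _ => f, memTf_one hf, by rw [maxEvenAlt_one]; omega⟩
  · refine ⟨3, threeTuple (f / 3) (f / 3) (f - 2 * (f / 3)), ?_,
      by simp [maxEvenAlt_three, threeTuple]⟩
    convert memTf_threeTuple (a := f / 3) (b := f / 3) (c := f - 2 * (f / 3))
      (by omega) le_rfl (by omega) using 1
    omega
end
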